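/- arXiv:0905.2220 — 4 statements merged into one kernel-verified Lean document; each statement's English description precedes it below -/
import Mathlib

section
/- Let E be a countable set with Markov transition probabilities (p_{y,z}), x₀ ∈ E, and φ : E → ℝ≥0 a function with φ(x₀) = 0 that is harmonic at every point x ≠ x₀ (i.e. Σ_y p_{x,y} φ(y) = φ(x) for x ≠ x₀). For r ∈ (0,1) set ψ_r(x) = (r/(1-r))·(Σ_y p_{x₀,y} φ(y)) + φ(x). Then for every starting point x, the process M_n = ψ_r(X_n)·r^{L_{n-1}}, where L_{n-1} = Σ_{m=0}^{n-1} 1{X_m = x₀} is the local time at x₀ up to time n-1, is a martingale with respect to the natural filtration of the chain (X_n) started at x. -/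
open MeasureTheory
open scoped ENNReal

/-!
Write `M n = F n (X 0, …, X n)` with `F n v = ψ (v n) * r ^ L(v)`, where `L(v)` counts the visits
of `v` to `x₀` before time `n`. On a cylinder `{(X 0, …, X n) = v}` the Markov property gives
`𝔼[M (n+1); cylinder] = ℙ(cylinder) * ∑ z, p (v n) z * F (n+1) (v, z)`, and the one-step identity
`F n v = ∑ z, p (v n) z * F (n+1) (v, z)` reduces to `r ^ 1{y = x₀} * ∑ z, p y z * ψ z = ψ y`:
harmonicity of `φ` off `x₀`, and at `x₀` the choice of the constant in `ψ`. Since `M ≥ 0`, the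
computation is done with lower Lebesgue integrals, so that the integrability of every `M n`
follows from the same identity.
-/

section Martingale

variable {Ω : Type*} {m0 : MeasurableSpace Ω} {μ : Measure Ω} {𝓕 : Filtration ℕ m0}

lemma martingale_of_setLIntegral_succ_eq [IsFiniteMeasure μ] {M : ℕ → Ω → ℝ}
    (hadapt : StronglyAdapted 𝓕 M) (hnonneg : ∀ n ω, 0 ≤ M n ω)
    (hint0 : Integrable (M 0) μ)
    (hstep : ∀ n s, MeasurableSet[𝓕 n] s →
      ∫⁻ ω in s, ENNReal.ofReal (M (n + 1) ω) ∂μ = ∫⁻ ω in s, ENNReal.ofReal (M n ω) ∂μ) :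
    Martingale M 𝓕 μ := by
  have hmeas : ∀ n, AEStronglyMeasurable (M n) μ :=
    fun n => ((hadapt n).mono (𝓕.le n)).aestronglyMeasurable
  have hint : ∀ n, Integrable (M n) μ := by
    intro n
    induction n with
    | zero => exact hint0
    | succ n ih =>
      refine ⟨hmeas (n + 1), ?_⟩
      rw [hasFiniteIntegral_iff_ofReal (ae_of_all _ (hnonneg _)), ← setLIntegral_univ,
        hstep n _ MeasurableSet.univ, setLIntegral_univ,
        ← hasFiniteIntegral_iff_ofReal (ae_of_all _ (hnonneg _))]
      exact ih.2
  have hsetIntegral : ∀ n s, MeasurableSet[𝓕 n] s →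
      ∫ ω in s, M n ω ∂μ = ∫ ω in s, M (n + 1) ω ∂μ := by
    intro n s hs
    rw [integral_eq_lintegral_of_nonneg_ae (ae_of_all _ (hnonneg _)) (hmeas n).restrict,
      integral_eq_lintegral_of_nonneg_ae (ae_of_all _ (hnonneg _)) (hmeas (n + 1)).restrict,
      hstep n s hs]
  refine martingale_nat hadapt hint fun n => ?_
  exact ae_eq_condExp_of_forall_setIntegral_eq (𝓕.le n) (hint (n + 1))
    (fun s _ _ => (hint n).integrableOn) (fun s hs _ => hsetIntegral n s hs)
    (hadapt n).aestronglyMeasurable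

end Martingale

namespace MarkovChain

variable {E Ω : Type*}

def path (X : ℕ → Ω → E) (n : ℕ) (ω : Ω) : Fin (n + 1) → E := fun i => X i ω

def cylinder (X : ℕ → Ω → E) (n : ℕ) (v : Fin (n + 1) → E) : Set Ω := path X n ⁻¹' {v}

def localTime [DecidableEq E] (x₀ : E) {n : ℕ} (v : Fin (n + 1) → E) : ℕ :=
  ∑ i : Fin n, if v i.castSucc = x₀ then 1 else 0

def IsPathHarmonic (p : E → E → ℝ) (F : (n : ℕ) → (Fin (n + 1) → E) → ℝ≥0∞) : Prop :=
  ∀ n v, F n v = ∑' z, ENNReal.ofReal (p (v (Fin.last n)) z) * F (n + 1) (Fin.snoc v z)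

def IsMarkovChainFrom [DecidableEq E] [MeasurableSpace Ω] (X : ℕ → Ω → E) (μ : Measure Ω)
    (p : E → E → ℝ) (x : E) : Prop :=
  ∀ n (s : ℕ → E), μ {ω | ∀ i ≤ n, X i ω = s i}
    = (if s 0 = x then 1 else 0) * ∏ i ∈ Finset.range n, ENNReal.ofReal (p (s i) (s (i + 1)))

lemma path_succ (X : ℕ → Ω → E) (n : ℕ) (ω : Ω) :
    path X (n + 1) ω = Fin.snoc (path X n ω) (X (n + 1) ω) := by
  funext i
  induction i using Fin.lastCases <;> simp [path]

lemma cylinder_eq_iUnion_snoc (X : ℕ → Ω → E) {n : ℕ} (v : Fin (n + 1) → E) :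
    cylinder X n v = ⋃ z, cylinder X (n + 1) (Fin.snoc v z) := by
  ext ω
  simp [cylinder, path_succ]

lemma cylinder_restrict (X : ℕ → Ω → E) (n : ℕ) (s : ℕ → E) :
    cylinder X n (fun i : Fin (n + 1) => s i) = {ω | ∀ i ≤ n, X i ω = s i} := by
  ext ω
  simp [cylinder, path, funext_iff, Fin.forall_iff]

lemma pairwise_disjoint_cylinder (X : ℕ → Ω → E) (n : ℕ) :
    Pairwise (Function.onFun Disjoint (cylinder X n)) :=
  fun _ _ h => (Set.disjoint_singleton.2 h).preimage _

lemma localTime_snoc [DecidableEq E] (x₀ : E) {n : ℕ} (v : Fin (n + 1) → E) (z : E) :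
    localTime x₀ (Fin.snoc v z : Fin (n + 2) → E)
      = localTime x₀ v + if v (Fin.last n) = x₀ then 1 else 0 := by
  simp [localTime, Fin.sum_univ_castSucc (n := n)]

lemma localTime_path [DecidableEq E] (x₀ : E) (X : ℕ → Ω → E) (n : ℕ) (ω : Ω) :
    localTime x₀ (path X n ω) = ∑ m ∈ Finset.range n, if X m ω = x₀ then 1 else 0 :=
  Fin.sum_univ_eq_sum_range (fun m => if X m ω = x₀ then 1 else 0) n

lemma IsMarkovChainFrom.measure_cylinder_snoc [DecidableEq E] [MeasurableSpace Ω]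
    {X : ℕ → Ω → E} {μ : Measure Ω} {p : E → E → ℝ} {x : E} (h : IsMarkovChainFrom X μ p x) {n : ℕ}
    (v : Fin (n + 1) → E) (z : E) :
    μ (cylinder X (n + 1) (Fin.snoc v z))
      = μ (cylinder X n v) * ENNReal.ofReal (p (v (Fin.last n)) z) := by
  -- a single sequence extending `snoc v z` describes both cylinders, so the two instances of `h`
  -- differ only by the last factor of the product
  let s : ℕ → E := fun i =>
    if hi : i < n + 2 then (Fin.snoc v z : Fin (n + 2) → E) ⟨i, hi⟩ else z
  have hsnoc : (Fin.snoc v z : Fin (n + 2) → E) = fun i : Fin (n + 2) => s i := by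
    funext i; simp [s]
  have hv : v = fun i : Fin (n + 1) => s i := by
    funext i
    have hi : (i : ℕ) < n + 2 := by omega
    simp [s, hi, show (⟨i, hi⟩ : Fin (n + 2)) = i.castSucc from rfl]
  have hlast : s n = v (Fin.last n) := by rw [hv]; rfl
  have hnext : s (n + 1) = z := by
    simp [s, show (⟨n + 1, by omega⟩ : Fin (n + 2)) = Fin.last _ from rfl]
  rw [hsnoc, cylinder_restrict, h, Finset.prod_range_succ, ← mul_assoc, ← h, ← cylinder_restrict,
    ← hv, hlast, hnext]

variable [MeasurableSpace E]

lemma iSup_comap_eq_comap_path (X : ℕ → Ω → E) (n : ℕ) :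
    ⨆ i ≤ n, MeasurableSpace.comap (X i) ‹MeasurableSpace E›
      = MeasurableSpace.comap (path X n) MeasurableSpace.pi := by
  refine le_antisymm (iSup₂_le fun i hi => ?_) ?_
  · rw [show X i = (fun v => v ⟨i, Nat.lt_succ_of_le hi⟩) ∘ path X n from rfl,
      ← MeasurableSpace.comap_comp]
    exact MeasurableSpace.comap_mono (measurable_pi_apply _).comap_le
  · set m := ⨆ i ≤ n, MeasurableSpace.comap (X i) ‹MeasurableSpace E›
    have hX : ∀ i : Fin (n + 1), Measurable[m] (X i) := fun i =>
      measurable_iff_comap_le.2 (le_iSup₂ (f := fun i (_ : i ≤ n) =>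
        MeasurableSpace.comap (X i) ‹MeasurableSpace E›) (i : ℕ) (Nat.lt_succ_iff.1 i.2))
    exact measurable_iff_comap_le.1 (measurable_pi_lambda (path X n) hX)

variable [MeasurableSpace Ω] [MeasurableSingletonClass E] {X : ℕ → Ω → E} {μ : Measure Ω}

lemma measurableSet_cylinder (hX : ∀ n, Measurable (X n)) {n : ℕ} (v : Fin (n + 1) → E) :
    MeasurableSet (cylinder X n v) :=
  measurable_pi_lambda (path X n) (fun i => hX i) (measurableSet_singleton v)

lemma setLIntegral_cylinder (hX : ∀ n, Measurable (X n)) {n : ℕ}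
    (G : (Fin (n + 1) → E) → ℝ≥0∞) (v : Fin (n + 1) → E) :
    ∫⁻ ω in cylinder X n v, G (path X n ω) ∂μ = G v * μ (cylinder X n v) := by
  rw [setLIntegral_congr_fun (g := fun _ => G v) (measurableSet_cylinder hX v)
    fun ω (hω : path X n ω = v) => by rw [hω], setLIntegral_const]

namespace IsMarkovChainFrom

variable [DecidableEq E] {p : E → E → ℝ} {x : E}

lemma ae_eq_start [IsProbabilityMeasure μ] (h : IsMarkovChainFrom X μ p x)
    (hX : ∀ n, Measurable (X n)) : ∀ᵐ ω ∂μ, X 0 ω = x := by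
  rw [ae_iff_measure_eq (p := fun ω => X 0 ω = x)
    (hX 0 (measurableSet_singleton x)).nullMeasurableSet, measure_univ]
  simpa using h 0 fun _ => x

variable [Countable E]

lemma setLIntegral_cylinder_succ (h : IsMarkovChainFrom X μ p x) (hX : ∀ n, Measurable (X n))
    {n : ℕ} (H : (Fin (n + 2) → E) → ℝ≥0∞) (v : Fin (n + 1) → E) :
    ∫⁻ ω in cylinder X n v, H (path X (n + 1) ω) ∂μ
      = μ (cylinder X n v) *
          ∑' z, ENNReal.ofReal (p (v (Fin.last n)) z) * H (Fin.snoc v z) := by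
  rw [cylinder_eq_iUnion_snoc X v, lintegral_iUnion (fun z => measurableSet_cylinder hX _)
    ((pairwise_disjoint_cylinder X _).comp_of_injective (Fin.snoc_right_injective v)),
    ← cylinder_eq_iUnion_snoc X v, ← ENNReal.tsum_mul_left]
  refine tsum_congr fun z => ?_
  rw [setLIntegral_cylinder hX, h.measure_cylinder_snoc]
  ring

lemma setLIntegral_succ_eq (h : IsMarkovChainFrom X μ p x) (hX : ∀ n, Measurable (X n))
    {F : (n : ℕ) → (Fin (n + 1) → E) → ℝ≥0∞} (hF : IsPathHarmonic p F) {n : ℕ}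
    {A : Set Ω}
    (hA : MeasurableSet[⨆ i ≤ n, MeasurableSpace.comap (X i) ‹MeasurableSpace E›] A) :
    ∫⁻ ω in A, F (n + 1) (path X (n + 1) ω) ∂μ = ∫⁻ ω in A, F n (path X n ω) ∂μ := by
  rw [iSup_comap_eq_comap_path] at hA
  obtain ⟨S, -, rfl⟩ := hA
  have hS : path X n ⁻¹' S = ⋃ v : S, cylinder X n v := by
    ext ω; simp [cylinder]
  have hdisj := (pairwise_disjoint_cylinder X n).comp_of_injective
    (Subtype.val_injective (p := (· ∈ S)))
  rw [hS, lintegral_iUnion (fun v => measurableSet_cylinder hX _) hdisj,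
    lintegral_iUnion (fun v => measurableSet_cylinder hX _) hdisj]
  refine tsum_congr fun v => ?_
  rw [h.setLIntegral_cylinder_succ hX, setLIntegral_cylinder hX, ← hF, mul_comm]

end IsMarkovChainFrom

end MarkovChain

open MarkovChain

section LocalTimeMartingale

variable {E : Type*} {p : E → E → ℝ}

lemma summable_mul_of_finite_support {y : E} (hfin : {z | p y z ≠ 0}.Finite) (g : E → ℝ) :
    Summable fun z => p y z * g z :=
  summable_of_hasFiniteSupport (hfin.subset (Function.support_mul_subset_left _ _))

variable [DecidableEq E] {x₀ : E} {r : ℝ} {ψ : E → ℝ}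

lemma pow_mul_tsum_eq_psi (hp1 : ∀ y, ∑' z, p y z = 1) (hfin : ∀ y, {z | p y z ≠ 0}.Finite)
    {φ : E → ℝ} (hφx₀ : φ x₀ = 0) (hharm : ∀ y, y ≠ x₀ → ∑' z, p y z * φ z = φ y)
    (hr1 : r ≠ 1) (hψ : ∀ y, ψ y = r / (1 - r) * (∑' z, p x₀ z * φ z) + φ y) (y : E) :
    r ^ (if y = x₀ then 1 else 0) * ∑' z, p y z * ψ z = ψ y := by
  have hsum :
      ∑' z, p y z * ψ z = r / (1 - r) * (∑' z, p x₀ z * φ z) + ∑' z, p y z * φ z := by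
    simp_rw [hψ, mul_add]
    rw [Summable.tsum_add (summable_mul_of_finite_support (hfin y) _)
      (summable_mul_of_finite_support (hfin y) _), tsum_mul_right, hp1, one_mul]
  split_ifs with hy
  · subst hy
    have : 1 - r ≠ 0 := sub_ne_zero.2 hr1.symm
    rw [hsum, hψ, hφx₀]
    field_simp
    ring
  · rw [pow_zero, one_mul, hsum, hharm y hy, hψ]

lemma isPathHarmonic_psi_mul_pow_localTime (hp0 : ∀ y z, 0 ≤ p y z)
    (hfin : ∀ y, {z | p y z ≠ 0}.Finite) (hr0 : 0 ≤ r) (hψ0 : ∀ y, 0 ≤ ψ y)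
    (hPψ : ∀ y, r ^ (if y = x₀ then 1 else 0) * ∑' z, p y z * ψ z = ψ y) :
    IsPathHarmonic p fun n v => ENNReal.ofReal (ψ (v (Fin.last n)) * r ^ localTime x₀ v) := by
  intro n v
  set y := v (Fin.last n)
  simp only [Fin.snoc_last, localTime_snoc, pow_add]
  have hnonneg :
      ∀ z, 0 ≤ p y z * (ψ z * (r ^ localTime x₀ v * r ^ (if y = x₀ then 1 else 0))) :=
    fun z => mul_nonneg (hp0 y z) (mul_nonneg (hψ0 z) (by positivity))
  simp_rw [← ENNReal.ofReal_mul (hp0 y _)]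
  rw [← ENNReal.ofReal_tsum_of_nonneg hnonneg (summable_mul_of_finite_support (hfin y) _)]
  congr 1
  conv_lhs => rw [← hPψ y]
  simp_rw [← mul_assoc, tsum_mul_right]
  ring

end LocalTimeMartingale

/-- **Proposition 4.1.1.** For a recurrent Markov chain on a countable set `E` with
transition probabilities `p`, a point `x₀`, a nonnegative function `φ` vanishing at `x₀`
and harmonic off `x₀`, and `ψ_r(x) = (r/(1-r))·𝔼_{x₀}[φ(X₁)] + φ(x)`, the process
`M_n = ψ_r(X_n)·r^{L_{n-1}^{x₀}}` is a martingale under `ℙ_x` for every starting point `x`. -/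
theorem stmt0
    {E : Type*} [Countable E] [DecidableEq E] [MeasurableSpace E]
    [MeasurableSingletonClass E]
    {Ω : Type*} [m0 : MeasurableSpace Ω]
    (X : ℕ → Ω → E) (hXmeas : ∀ n, Measurable (X n))
    (ℙ : E → Measure Ω) (hprob : ∀ x, IsProbabilityMeasure (ℙ x))
    (p : E → E → ℝ) (hp0 : ∀ y z, 0 ≤ p y z) (hp1 : ∀ y, ∑' z, p y z = 1)
    (hfin : ∀ y, {z | p y z ≠ 0}.Finite)
    -- the canonical Markov chain property: finite dimensional distributions
    (hchain : ∀ (x : E) (n : ℕ) (s : ℕ → E),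
      (ℙ x) {ω | ∀ i ≤ n, X i ω = s i}
        = (if s 0 = x then 1 else 0) *
            ∏ i ∈ Finset.range n, ENNReal.ofReal (p (s i) (s (i + 1))))
    -- the natural filtration of the chain
    (𝓕 : Filtration ℕ m0)
    (h𝓕 : ∀ n, 𝓕 n = ⨆ i ≤ n, MeasurableSpace.comap (X i) inferInstance)
    (x₀ : E) (φ : E → ℝ) (hφ0 : ∀ y, 0 ≤ φ y) (hφx₀ : φ x₀ = 0)
    (hharm : ∀ y, y ≠ x₀ → ∑' z, p y z * φ z = φ y)
    (r : ℝ) (hr0 : 0 < r) (hr1 : r < 1)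
    (ψ : E → ℝ)
    (hψ : ∀ y, ψ y = r / (1 - r) * (∑' z, p x₀ z * φ z) + φ y)
    (x : E) :
    Martingale
      (fun n ω =>
        ψ (X n ω) * r ^ ∑ m ∈ Finset.range n, (if X m ω = x₀ then (1 : ℕ) else 0))
      𝓕 (ℙ x) := by
  have := hprob x
  have hchain_x : IsMarkovChainFrom X (ℙ x) p x := hchain x
  have hψ0 : ∀ y, 0 ≤ ψ y := fun y => hψ y ▸ add_nonneg
    (mul_nonneg (div_nonneg hr0.le (sub_pos.2 hr1).le)
      (tsum_nonneg fun z => mul_nonneg (hp0 x₀ z) (hφ0 z))) (hφ0 y)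
  set F : (n : ℕ) → (Fin (n + 1) → E) → ℝ :=
    fun n v => ψ (v (Fin.last n)) * r ^ localTime x₀ v
  have hM : (fun n ω =>
        ψ (X n ω) * r ^ ∑ m ∈ Finset.range n, (if X m ω = x₀ then (1 : ℕ) else 0))
      = fun n ω => F n (path X n ω) := by
    funext n ω
    simp only [F, localTime_path]
    rfl
  have hadapt : StronglyAdapted 𝓕 fun n ω => F n (path X n ω) := fun n => by
    have : Measurable[𝓕 n] (path X n) := by
      rw [h𝓕, iSup_comap_eq_comap_path]; exact comap_measurable _
    exact ((measurable_of_countable (F n)).comp this).stronglyMeasurable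
  have hint0 : Integrable (fun ω => F 0 (path X 0 ω)) (ℙ x) := by
    refine (integrable_const (ψ x)).congr ?_
    filter_upwards [hchain_x.ae_eq_start hXmeas] with ω hω
    simp [F, path, localTime, hω]
  rw [hM]
  refine martingale_of_setLIntegral_succ_eq hadapt
    (fun n ω => mul_nonneg (hψ0 _) (pow_nonneg hr0.le _)) hint0 fun n s hs => ?_
  exact hchain_x.setLIntegral_succ_eq hXmeas
    (isPathHarmonic_psi_mul_pow_localTime hp0 hfin hr0.le hψ0
      (pow_mul_tsum_eq_psi hp1 hfin hφx₀ hharm hr1.ne hψ)) (h𝓕 n ▸ hs)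
end

section
/- Let E be a countable set with an irreducible recurrent Markov chain, y₀ ∈ E, and let φ₁, φ₂ : E → ℝ≥0 be two functions vanishing at y₀ and harmonic at every point ≠ y₀. If φ₁ ≃ φ₂ (they are asymptotically equivalent as φ₁ + φ₂ → ∞, in the sense that for every ε > 0 there is A with φ₁(x)+φ₂(x) ≥ A ⟹ |φ₁(x)/φ₂(x) − 1| ≤ ε), then φ₁ = φ₂. -/
open MeasureTheory Filter Topology

open scoped ENNReal

/-!
Let `r n` be the law at time `n` of the chain started at `x` and killed on visiting `y₀`. If
`φ ≥ 0` vanishes at `y₀` and is harmonic elsewhere, then `φ x = ∑ z, r n z * φ z` for every `n`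
(optional stopping at the hitting time of `y₀`), and recurrence makes the total mass `∑ z, r n z`
tend to `0`. Asymptotic equivalence gives, for `0 < ε < 1`, a constant `A` with
`(1 - ε) φ₁ ≤ (1 + ε) φ₂ + A` everywhere; averaging against `r n` gives
`(1 - ε) φ₁ x ≤ (1 + ε) φ₂ x + A ∑ z, r n z`. Letting `n → ∞` and then `ε → 0` yields
`φ₁ x ≤ φ₂ x`, and the same argument with `φ₁` and `φ₂` exchanged gives the reverse inequality.
-/

theorem measure_eq_tsum_inter_preimage_singleton {Ω E : Type*} [MeasurableSpace Ω] [Countable E]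
    [MeasurableSpace E] [MeasurableSingletonClass E] (μ : Measure Ω) {f : Ω → E}
    (hf : Measurable f) {S : Set Ω} (hS : MeasurableSet S) :
    μ S = ∑' y, μ (S ∩ f ⁻¹' {y}) := by
  conv_lhs => rw [show S = ⋃ y, S ∩ f ⁻¹' {y} by ext; simp]
  refine measure_iUnion (fun a b hab => ?_) fun y => hS.inter (hf (measurableSet_singleton y))
  exact ((Set.disjoint_singleton.2 hab).preimage f).mono Set.inter_subset_right
    Set.inter_subset_right

def seqCons {α : Type*} (a : α) (s : ℕ → α) : ℕ → α
  | 0 => a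
  | j + 1 => s j

theorem avoid_cylinder_succ_inter_preimage_singleton {Ω E : Type*} {X : ℕ → Ω → E} {y₀ y : E}
    (hy : y ≠ y₀) {n m : ℕ} {s : ℕ → E} :
    {ω | (∀ i < n + 1, X i ω ≠ y₀) ∧ ∀ j ≤ m, X (n + 1 + j) ω = s j} ∩ X n ⁻¹' {y}
      = {ω | (∀ i < n, X i ω ≠ y₀) ∧ ∀ j ≤ m + 1, X (n + j) ω = seqCons y s j} := by
  ext ω
  simp only [Set.mem_inter_iff, Set.mem_ofPred_eq, Set.mem_preimage, Set.mem_singleton_iff]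
  constructor
  · rintro ⟨⟨havoid, hpath⟩, hXn⟩
    refine ⟨fun i hi => havoid i (by omega), fun j hj => ?_⟩
    cases j with
    | zero => exact hXn
    | succ j =>
      rw [show n + (j + 1) = n + 1 + j by omega]
      exact hpath j (by omega)
  · rintro ⟨havoid, hpath⟩
    have hXn : X n ω = y := hpath 0 (Nat.zero_le _)
    refine ⟨⟨fun i hi => ?_, fun j hj => ?_⟩, hXn⟩
    · rcases Nat.lt_succ_iff_lt_or_eq.1 hi with hi | rfl
      · exact havoid i hi
      · exact hXn ▸ hy
    · rw [show n + 1 + j = n + (j + 1) by omega]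
      exact hpath (j + 1) (by omega)

theorem le_of_le_add_of_tendsto_tsum_zero {E : Type*} {w : ℕ → E → ℝ≥0∞}
    (hw : Tendsto (fun n => ∑' z, w n z) atTop (𝓝 0)) {f g : E → ℝ≥0∞} {F G A : ℝ≥0∞}
    (hA : A ≠ ∞) (hf : ∀ n, ∑' z, w n z * f z = F) (hg : ∀ n, ∑' z, w n z * g z = G)
    (hfg : ∀ z, f z ≤ g z + A) : F ≤ G := by
  have hbound : ∀ n, F ≤ G + (∑' z, w n z) * A := fun n => calc
    F = ∑' z, w n z * f z := (hf n).symm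
    _ ≤ ∑' z, w n z * (g z + A) := ENNReal.tsum_le_tsum fun z => mul_le_mul_right (hfg z) _
    _ = G + (∑' z, w n z) * A := by
      rw [← hg n, ← ENNReal.tsum_mul_right, ← ENNReal.tsum_add]
      simp only [mul_add]
  have hlim : Tendsto (fun n => G + (∑' z, w n z) * A) atTop (𝓝 (G + 0 * A)) :=
    tendsto_const_nhds.add (ENNReal.Tendsto.mul_const hw (Or.inr hA))
  simpa using ge_of_tendsto' hlim hbound

theorem le_of_forall_one_sub_mul_le_one_add_mul {a b : ℝ}
    (h : ∀ ε, 0 < ε → ε < 1 → (1 - ε) * a ≤ (1 + ε) * b) : a ≤ b := by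
  have hlim : ∀ f : ℝ → ℝ, Continuous f → Tendsto f (𝓝[>] 0) (𝓝 (f 0)) :=
    fun f hf => hf.continuousAt.tendsto.mono_left nhdsWithin_le_nhds
  have hlimit := le_of_tendsto_of_tendsto (hlim (fun ε => (1 - ε) * a) (by fun_prop))
    (hlim (fun ε => (1 + ε) * b) (by fun_prop))
    (by filter_upwards [Ioo_mem_nhdsGT one_pos] with ε hε using h ε hε.1 hε.2)
  simpa using hlimit

theorem exists_forall_one_sub_mul_le_one_add_mul_add {E : Type*} {φ₁ φ₂ : E → ℝ}
    (hφ₁ : ∀ y, 0 ≤ φ₁ y) (hφ₂ : ∀ y, 0 ≤ φ₂ y)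
    (hequiv : ∀ ε : ℝ, 0 < ε → ∃ A : ℝ, 0 < A ∧
      ∀ x : E, A ≤ φ₁ x + φ₂ x → |φ₁ x / φ₂ x - 1| ≤ ε)
    {ε : ℝ} (hε : 0 < ε) (hε1 : ε < 1) :
    ∃ A : ℝ, ∀ z,
      (1 - ε) * φ₁ z ≤ (1 + ε) * φ₂ z + A ∧ (1 - ε) * φ₂ z ≤ (1 + ε) * φ₁ z + A := by
  obtain ⟨A, hA, hAz⟩ := hequiv ε hε
  refine ⟨A, fun z => ?_⟩
  have h₁ := hφ₁ z
  have h₂ := hφ₂ z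
  by_cases hz : A ≤ φ₁ z + φ₂ z
  · have hr := hAz z hz
    have h₂pos : 0 < φ₂ z := h₂.lt_of_ne fun h => by
      rw [← h, div_zero, zero_sub, abs_neg, abs_one] at hr
      linarith
    rw [abs_sub_le_iff, sub_le_iff_le_add, sub_le_comm, div_le_iff₀ h₂pos,
      le_div_iff₀ h₂pos] at hr
    constructor <;> nlinarith
  · constructor <;> nlinarith

def IsHarmonicOff {E : Type*} (p : E → E → ℝ) (y₀ : E) (φ : E → ℝ) : Prop :=
  ∀ y, y ≠ y₀ → ∑' z, p y z * φ z = φ y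

theorem IsHarmonicOff.const_mul {E : Type*} {p : E → E → ℝ} {y₀ : E} {φ : E → ℝ}
    (hφ : IsHarmonicOff p y₀ φ) (a : ℝ) : IsHarmonicOff p y₀ (fun z => a * φ z) := by
  intro y hy
  simp only [mul_left_comm _ a, tsum_mul_left, hφ y hy]

section KilledChain

variable {E : Type*} [DecidableEq E]

/-- `killedDist p y₀ x n z` is the probability that the chain started at `x` is at `z` at time `n`
without having visited `y₀` at the times `0, …, n - 1`. -/
noncomputable def killedDist (p : E → E → ℝ) (y₀ x : E) : ℕ → E → ℝ≥0∞
  | 0 => fun z => if z = x then 1 else 0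
  | n + 1 => fun z =>
      ∑' y, (if y = y₀ then 0 else killedDist p y₀ x n y) * ENNReal.ofReal (p y z)

theorem IsHarmonicOff.tsum_killedDist_mul {p : E → E → ℝ} {y₀ : E} {φ : E → ℝ}
    (hφ : IsHarmonicOff p y₀ φ) (hφy₀ : φ y₀ = 0) (hφ0 : ∀ y, 0 ≤ φ y)
    (hp0 : ∀ y z, 0 ≤ p y z) (hfin : ∀ y, {z | p y z ≠ 0}.Finite) (x : E) (n : ℕ) :
    ∑' z, killedDist p y₀ x n z * ENNReal.ofReal (φ z) = ENNReal.ofReal (φ x) := by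
  have hstep : ∀ y, y ≠ y₀ →
      ∑' z, ENNReal.ofReal (p y z) * ENNReal.ofReal (φ z) = ENNReal.ofReal (φ y) := by
    intro y hy
    have hsum : Summable fun z => p y z * φ z :=
      summable_of_hasFiniteSupport <| show Set.Finite _ from
        (hfin y).subset fun z hz => left_ne_zero_of_mul hz
    simp_rw [← ENNReal.ofReal_mul (hp0 y _)]
    rw [← ENNReal.ofReal_tsum_of_nonneg (fun z => mul_nonneg (hp0 y z) (hφ0 z)) hsum, hφ y hy]
  induction n with
  | zero => simp [killedDist]
  | succ n ih =>
    calc ∑' z, killedDist p y₀ x (n + 1) z * ENNReal.ofReal (φ z)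
        = ∑' y, (if y = y₀ then 0 else killedDist p y₀ x n y) *
            ∑' z, ENNReal.ofReal (p y z) * ENNReal.ofReal (φ z) := by
          simp_rw [killedDist, ← ENNReal.tsum_mul_right, ← ENNReal.tsum_mul_left, mul_assoc]
          exact ENNReal.tsum_comm
      _ = ∑' y, killedDist p y₀ x n y * ENNReal.ofReal (φ y) := by
          congr 1 with y
          by_cases hy : y = y₀
          · simp [hy, hφy₀]
          · rw [if_neg hy, hstep y hy]
      _ = ENNReal.ofReal (φ x) := ih

theorem IsHarmonicOff.le_of_tendsto_tsum_killedDist {p : E → E → ℝ} {y₀ x : E}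
    (hp0 : ∀ y z, 0 ≤ p y z) (hfin : ∀ y, {z | p y z ≠ 0}.Finite)
    (hmass : Tendsto (fun n => ∑' z, killedDist p y₀ x n z) atTop (𝓝 0)) {u v : E → ℝ}
    (hu : IsHarmonicOff p y₀ u) (huy₀ : u y₀ = 0) (hu0 : ∀ y, 0 ≤ u y)
    (hv : IsHarmonicOff p y₀ v) (hvy₀ : v y₀ = 0) (hv0 : ∀ y, 0 ≤ v y)
    (huv : ∀ ε, 0 < ε → ε < 1 → ∃ A : ℝ, ∀ z, (1 - ε) * u z ≤ (1 + ε) * v z + A) :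
    u x ≤ v x := by
  refine le_of_forall_one_sub_mul_le_one_add_mul fun ε hε hε1 => ?_
  obtain ⟨A, hA⟩ := huv ε hε hε1
  have hmean := le_of_le_add_of_tendsto_tsum_zero hmass ENNReal.ofReal_ne_top
    ((hu.const_mul (1 - ε)).tsum_killedDist_mul (by simp [huy₀])
      (fun y => mul_nonneg (by linarith) (hu0 y)) hp0 hfin x)
    ((hv.const_mul (1 + ε)).tsum_killedDist_mul (by simp [hvy₀])
      (fun y => mul_nonneg (by linarith) (hv0 y)) hp0 hfin x)
    (fun z => (ENNReal.ofReal_le_ofReal (hA z)).trans ENNReal.ofReal_add_le)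
  exact (ENNReal.ofReal_le_ofReal_iff (mul_nonneg (by linarith) (hv0 x))).1 hmean

variable {Ω : Type*} [MeasurableSpace Ω]

def HasPathLaw (μ : Measure Ω) (X : ℕ → Ω → E) (p : E → E → ℝ) (x : E) : Prop :=
  ∀ (n : ℕ) (s : ℕ → E), μ {ω | ∀ i ≤ n, X i ω = s i}
    = (if s 0 = x then 1 else 0) * ∏ i ∈ Finset.range n, ENNReal.ofReal (p (s i) (s (i + 1)))

variable [Countable E] [MeasurableSpace E] [MeasurableSingletonClass E]
  {μ : Measure Ω} {X : ℕ → Ω → E} {p : E → E → ℝ} {x : E}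

theorem HasPathLaw.measure_avoid_cylinder (hlaw : HasPathLaw μ X p x)
    (hX : ∀ n, Measurable (X n)) (y₀ : E) (n : ℕ) : ∀ (m : ℕ) (s : ℕ → E),
    μ {ω | (∀ i < n, X i ω ≠ y₀) ∧ ∀ j ≤ m, X (n + j) ω = s j}
      = killedDist p y₀ x n (s 0) *
          ∏ j ∈ Finset.range m, ENNReal.ofReal (p (s j) (s (j + 1))) := by
  induction n with
  | zero =>
    intro m s
    simpa [killedDist, eq_comm] using hlaw m s
  | succ n ih =>
    intro m s
    rw [measure_eq_tsum_inter_preimage_singleton μ (hX n) (by measurability)]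
    have hfiber : ∀ y, μ ({ω | (∀ i < n + 1, X i ω ≠ y₀) ∧ ∀ j ≤ m, X (n + 1 + j) ω = s j}
          ∩ X n ⁻¹' {y}) = (if y = y₀ then 0 else killedDist p y₀ x n y) *
            ENNReal.ofReal (p y (s 0)) *
              ∏ j ∈ Finset.range m, ENNReal.ofReal (p (s j) (s (j + 1))) := by
      intro y
      split_ifs with hy
      · subst hy
        rw [zero_mul, zero_mul]
        exact measure_mono_null (fun ω ⟨⟨havoid, _⟩, hXn⟩ => havoid n n.lt_succ_self hXn)
          measure_empty
      · rw [avoid_cylinder_succ_inter_preimage_singleton hy, ih, Finset.prod_range_succ',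
          mul_comm (∏ j ∈ _, _), mul_assoc]
        rfl
    simp_rw [hfiber, ENNReal.tsum_mul_right, killedDist]

theorem HasPathLaw.measure_avoid (hlaw : HasPathLaw μ X p x) (hX : ∀ n, Measurable (X n))
    (y₀ : E) (n : ℕ) : μ {ω | ∀ i < n, X i ω ≠ y₀} = ∑' z, killedDist p y₀ x n z := by
  rw [measure_eq_tsum_inter_preimage_singleton μ (hX n) (by measurability)]
  congr 1 with z
  convert hlaw.measure_avoid_cylinder hX y₀ n 0 (fun _ => z) using 2
  · ext ω
    simp [and_comm]
  · simp

theorem HasPathLaw.tendsto_tsum_killedDist [IsFiniteMeasure μ] (hlaw : HasPathLaw μ X p x)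
    (hX : ∀ n, Measurable (X n)) {y₀ : E} (hrec : ∀ᵐ ω ∂μ, ∃ n, 0 < n ∧ X n ω = y₀) :
    Tendsto (fun n => ∑' z, killedDist p y₀ x n z) atTop (𝓝 0) := by
  simp_rw [← hlaw.measure_avoid hX]
  have hnull : μ (⋂ n, {ω | ∀ i < n, X i ω ≠ y₀}) = 0 := by
    refine measure_mono_null ?_ (ae_iff.1 hrec)
    rintro ω hω ⟨n, -, hn⟩
    exact Set.mem_iInter.1 hω (n + 1) n n.lt_succ_self hn
  rw [← hnull]
  exact tendsto_measure_iInter_atTop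
    (fun n => (by measurability : MeasurableSet _).nullMeasurableSet)
    (fun a b hab ω hω i hi => hω i (hi.trans_le hab)) ⟨0, measure_ne_top μ _⟩

end KilledChain

theorem stmt3_general
    {E : Type*} [Countable E] [DecidableEq E] [MeasurableSpace E]
    [MeasurableSingletonClass E]
    {Ω : Type*} [MeasurableSpace Ω]
    (X : ℕ → Ω → E) (hXmeas : ∀ n, Measurable (X n))
    (ℙ : E → Measure Ω) (hprob : ∀ x, IsProbabilityMeasure (ℙ x))
    (p : E → E → ℝ) (hp0 : ∀ y z, 0 ≤ p y z)
    (hfin : ∀ y, {z | p y z ≠ 0}.Finite)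
    -- the canonical Markov chain property: finite dimensional distributions
    (hchain : ∀ (x : E) (n : ℕ) (s : ℕ → E),
      (ℙ x) {ω | ∀ i ≤ n, X i ω = s i}
        = (if s 0 = x then 1 else 0) *
            ∏ i ∈ Finset.range n, ENNReal.ofReal (p (s i) (s (i + 1))))
    (y₀ : E)
    -- recurrence: from any starting point, the chain hits `y₀` a.s.
    (hrec : ∀ x : E, ∀ᵐ ω ∂(ℙ x), ∃ n : ℕ, 0 < n ∧ X n ω = y₀)
    (φ₁ φ₂ : E → ℝ) (hφ₁0 : ∀ y, 0 ≤ φ₁ y) (hφ₂0 : ∀ y, 0 ≤ φ₂ y)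
    (hφ₁y₀ : φ₁ y₀ = 0) (hφ₂y₀ : φ₂ y₀ = 0)
    (hharm₁ : ∀ y, y ≠ y₀ → ∑' z, p y z * φ₁ z = φ₁ y)
    (hharm₂ : ∀ y, y ≠ y₀ → ∑' z, p y z * φ₂ z = φ₂ y)
    -- `φ₁ ≃ φ₂` : asymptotic equivalence as `φ₁ + φ₂ → ∞`
    (hequiv : ∀ ε : ℝ, 0 < ε → ∃ A : ℝ, 0 < A ∧
      ∀ x : E, A ≤ φ₁ x + φ₂ x → |φ₁ x / φ₂ x - 1| ≤ ε) :
    φ₁ = φ₂ := by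
  funext x
  have := hprob x
  have hmass := HasPathLaw.tendsto_tsum_killedDist (hchain x) hXmeas (hrec x)
  have hbound := fun ε hε hε1 =>
    exists_forall_one_sub_mul_le_one_add_mul_add hφ₁0 hφ₂0 hequiv (ε := ε) hε hε1
  exact le_antisymm
    (IsHarmonicOff.le_of_tendsto_tsum_killedDist hp0 hfin hmass hharm₁ hφ₁y₀ hφ₁0 hharm₂ hφ₂y₀
      hφ₂0 fun ε hε hε1 => (hbound ε hε hε1).imp fun _ hA z => (hA z).1)
    (IsHarmonicOff.le_of_tendsto_tsum_killedDist hp0 hfin hmass hharm₂ hφ₂y₀ hφ₂0 hharm₁ hφ₁y₀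
      hφ₁0 fun ε hε hε1 => (hbound ε hε hε1).imp fun _ hA z => (hA z).2)

/-- **Lemma 4.2.8.** For an irreducible recurrent Markov chain on a countable set `E`,
two nonnegative functions `φ₁, φ₂` vanishing at a point `y₀`, harmonic at every other
point, and asymptotically equivalent as `φ₁ + φ₂ → ∞`, are equal. -/
theorem stmt3
    {E : Type*} [Countable E] [DecidableEq E] [MeasurableSpace E]
    [MeasurableSingletonClass E]
    {Ω : Type*} [MeasurableSpace Ω]
    (X : ℕ → Ω → E) (hXmeas : ∀ n, Measurable (X n))
    (ℙ : E → Measure Ω) (hprob : ∀ x, IsProbabilityMeasure (ℙ x))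
    (p : E → E → ℝ) (hp0 : ∀ y z, 0 ≤ p y z) (hp1 : ∀ y, ∑' z, p y z = 1)
    (hfin : ∀ y, {z | p y z ≠ 0}.Finite)
    -- the canonical Markov chain property: finite dimensional distributions
    (hchain : ∀ (x : E) (n : ℕ) (s : ℕ → E),
      (ℙ x) {ω | ∀ i ≤ n, X i ω = s i}
        = (if s 0 = x then 1 else 0) *
            ∏ i ∈ Finset.range n, ENNReal.ofReal (p (s i) (s (i + 1))))
    -- irreducibility
    (hirr : ∀ x y : E, ∃ n : ℕ, 0 < (ℙ x) {ω | X n ω = y})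
    (y₀ : E)
    -- recurrence: from any starting point, the chain hits `y₀` a.s.
    (hrec : ∀ x : E, ∀ᵐ ω ∂(ℙ x), ∃ n : ℕ, 0 < n ∧ X n ω = y₀)
    (φ₁ φ₂ : E → ℝ) (hφ₁0 : ∀ y, 0 ≤ φ₁ y) (hφ₂0 : ∀ y, 0 ≤ φ₂ y)
    (hφ₁y₀ : φ₁ y₀ = 0) (hφ₂y₀ : φ₂ y₀ = 0)
    (hharm₁ : ∀ y, y ≠ y₀ → ∑' z, p y z * φ₁ z = φ₁ y)
    (hharm₂ : ∀ y, y ≠ y₀ → ∑' z, p y z * φ₂ z = φ₂ y)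
    -- `φ₁ ≃ φ₂` : asymptotic equivalence as `φ₁ + φ₂ → ∞`
    (hequiv : ∀ ε : ℝ, 0 < ε → ∃ A : ℝ, 0 < A ∧
      ∀ x : E, A ≤ φ₁ x + φ₂ x → |φ₁ x / φ₂ x - 1| ≤ ε) :
    φ₁ = φ₂ :=
  stmt3_general X hXmeas ℙ hprob p hp0 hfin hchain y₀ hrec φ₁ φ₂ hφ₁0 hφ₂0 hφ₁y₀ hφ₂y₀ hharm₁ hharm₂
    hequiv
end

section
/- For the simple symmetric random walk on ℤ² with transition probabilities 1/4 to each nearest neighbour, there exist a constant C > 0 and, for each (x,y) ∈ ℤ², a bounded error k ↦ ε_{(x,y)}(k) with sup_k k²·|ε_{(x,y)}(k)| < ∞, such that ℙ_{(x,y)}[X_k = (0,0)] = 1{k ≡ x+y (mod 2)}·C/(k+1) + ε_{(x,y)}(k). Consequently, the limit φ((x,y)) := lim_{N→∞} Σ_{k=0}^{N} [ℙ_{(0,0)}(X_k = (0,0)) − ℙ_{(x,y)}(X_k = (0,0))] exists, is nonnegative, and defines a function harmonic on ℤ² \ {(0,0)} vanishing at the origin (the discrete potential kernel). -/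
/-!
In the rotated coordinates `x + y`, `x - y` the planar walk splits into two independent
simple walks on `ℤ`, so at even times `ℙ_z[X_{2n} = 0]` is a product of two centred binomial
masses `C(2n, n + a) / 4ⁿ`. Each mass is within `O(a² / n)` of the central one, and the square
of the central mass equals `1 / ((2n + 1) W_n)` with `W_n` the Wallis product, hence is
`(2/π) / (2n + 1) + O(1/n²)`. One averaging step transfers the estimate to odd times.

The error terms are then summable, and after removing them the remaining series is either
zero or an alternating harmonic series, so `φ` exists. Grouping the times in pairs shows that
the partial sums are nonnegative, and harmonicity off the origin follows from the
one-step recursion by telescoping, using `ℙ_z[X_N = 0] → 0`.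
-/

open Filter Topology

/-- `srwP k z` is the probability that the simple symmetric random walk on `ℤ²`
started at `z` is at the origin at time `k` (equivalently, started at `0` is at `z`
at time `k`, by symmetry). -/
noncomputable def srwP : ℕ → ℤ × ℤ → ℝ
  | 0, z => if z = 0 then 1 else 0
  | n + 1, z =>
      (srwP n (z + (1, 0)) + srwP n (z - (1, 0)) +
        srwP n (z + (0, 1)) + srwP n (z - (0, 1))) / 4

open Finset Real

noncomputable def neighborMean (f : ℤ × ℤ → ℝ) (z : ℤ × ℤ) : ℝ :=
  (f (z + (1, 0)) + f (z - (1, 0)) + f (z + (0, 1)) + f (z - (0, 1))) / 4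

lemma srwP_succ (n : ℕ) (z : ℤ × ℤ) : srwP (n + 1) z = neighborMean (srwP n) z := rfl

noncomputable def srw1P : ℕ → ℤ → ℝ
  | 0, m => if m = 0 then 1 else 0
  | n + 1, m => (srw1P n (m + 1) + srw1P n (m - 1)) / 2

lemma srw1P_nonneg (k : ℕ) (m : ℤ) : 0 ≤ srw1P k m := by
  induction k generalizing m with
  | zero => unfold srw1P; positivity
  | succ n ih => unfold srw1P; linarith [ih (m + 1), ih (m - 1)]

lemma srw1P_neg (k : ℕ) (m : ℤ) : srw1P k (-m) = srw1P k m := by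
  induction k generalizing m with
  | zero => simp [srw1P]
  | succ n ih =>
    simp only [srw1P]
    rw [show -m + 1 = -(m - 1) by ring, show -m - 1 = -(m + 1) by ring, ih, ih, add_comm]

lemma srw1P_eq_zero_of_mod_two_ne (k : ℕ) (m : ℤ) (h : (m + k) % 2 ≠ 0) : srw1P k m = 0 := by
  induction k generalizing m with
  | zero => simp only [srw1P]; rw [if_neg]; omega
  | succ n ih =>
    simp only [srw1P]
    rw [ih (m + 1) (by push_cast at h; omega), ih (m - 1) (by push_cast at h; omega)]
    norm_num

lemma srw1P_two_mul_sub (k : ℕ) (j : ℤ) :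
    srw1P k (2 * j - k) = if 0 ≤ j then (k.choose j.toNat : ℝ) / 2 ^ k else 0 := by
  induction k generalizing j with
  | zero =>
    simp only [srw1P, Nat.cast_zero, sub_zero]
    rcases lt_trichotomy j 0 with h | rfl | h
    · rw [if_neg (by omega), if_neg (by omega)]
    · norm_num
    · rw [if_neg (by omega), if_pos h.le, Nat.choose_eq_zero_of_lt (by omega)]
      norm_num
  | succ n ih =>
    simp only [srw1P]
    rw [show 2 * j - ((n + 1 : ℕ) : ℤ) + 1 = 2 * j - n by push_cast; ring,
      show 2 * j - ((n + 1 : ℕ) : ℤ) - 1 = 2 * (j - 1) - n by push_cast; ring, ih, ih]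
    rcases lt_trichotomy j 0 with h | rfl | h
    · simp only [if_neg (show ¬ 0 ≤ j by omega), if_neg (show ¬ 0 ≤ j - 1 by omega)]
      norm_num
    · norm_num [pow_succ, div_eq_mul_inv, mul_comm]
    · rw [if_pos h.le, if_pos (by omega), if_pos h.le,
        show j.toNat = (j - 1).toNat + 1 by omega, Nat.choose_succ_succ]
      push_cast
      ring

noncomputable def binomMass (n a : ℕ) : ℝ := ((2 * n).choose (n + a) : ℝ) / 4 ^ n

lemma srw1P_two_mul_two_mul (n a : ℕ) : srw1P (2 * n) (2 * a) = binomMass n a := by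
  have h := srw1P_two_mul_sub (2 * n) (n + a)
  rw [show 2 * ((n : ℤ) + a) - (2 * n : ℕ) = 2 * a by push_cast; ring, if_pos (by positivity),
    show ((n : ℤ) + a).toNat = n + a by omega] at h
  rw [h, binomMass, pow_mul]
  norm_num

lemma srw1P_two_mul_of_mod_two_eq (n : ℕ) (m : ℤ) (hm : m % 2 = 0) :
    srw1P (2 * n) m = binomMass n (m / 2).natAbs := by
  rcases Int.natAbs_eq (m / 2) with h | h
  · rw [← srw1P_two_mul_two_mul]; congr 1; omega
  · rw [← srw1P_two_mul_two_mul, ← srw1P_neg]; congr 1; omega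

-- The coordinates `x + y` and `x - y` of the planar walk perform independent walks on `ℤ`.
lemma srwP_eq_mul (k : ℕ) (z : ℤ × ℤ) :
    srwP k z = srw1P k (z.1 + z.2) * srw1P k (z.1 - z.2) := by
  induction k generalizing z with
  | zero =>
    obtain ⟨x, y⟩ := z
    simp only [srwP, srw1P, Prod.mk_eq_zero, mul_ite, mul_one, mul_zero]
    split_ifs <;> first | rfl | omega
  | succ n ih =>
    simp only [srwP_succ, neighborMean, srw1P, ih, Prod.fst_add, Prod.snd_add, Prod.fst_sub,
      Prod.snd_sub]
    ring_nf

lemma binomMass_nonneg (n a : ℕ) : 0 ≤ binomMass n a := by unfold binomMass; positivity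

lemma binomMass_le_binomMass_zero (n a : ℕ) : binomMass n a ≤ binomMass n 0 := by
  unfold binomMass
  gcongr
  simpa using Nat.choose_le_middle (n + a) (2 * n)

lemma binomMass_eq_zero (n a : ℕ) (h : n < a) : binomMass n a = 0 := by
  rw [binomMass, Nat.choose_eq_zero_of_lt (by omega), Nat.cast_zero, zero_div]

lemma binomMass_succ_mul (n a : ℕ) (h : a ≤ n) :
    binomMass n (a + 1) * (n + a + 1) = binomMass n a * (n - a) := by
  have key := Nat.choose_succ_right_eq (2 * n) (n + a)
  rw [show 2 * n - (n + a) = n - a by omega] at key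
  have hcast : ((2 * n).choose (n + a + 1) : ℝ) * (n + a + 1)
      = ((2 * n).choose (n + a) : ℝ) * (n - a) := by
    rw [← Nat.cast_sub h]; exact_mod_cast key
  unfold binomMass
  rw [← add_assoc, div_mul_eq_mul_div, hcast, div_mul_eq_mul_div]

lemma binomMass_sub_binomMass_succ_le (n a : ℕ) :
    binomMass n a - binomMass n (a + 1) ≤ binomMass n 0 * (2 * a + 1) / (n + 1) := by
  have hmax := binomMass_le_binomMass_zero n a
  have hpos : (0 : ℝ) < n + 1 := by positivity
  rw [le_div_iff₀ hpos]
  rcases le_or_gt n a with hna | han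
  · rw [binomMass_eq_zero n (a + 1) (by omega), sub_zero]
    have : (n : ℝ) + 1 ≤ 2 * a + 1 := by norm_cast; omega
    nlinarith [binomMass_nonneg n a]
  · have hstep := binomMass_succ_mul n a han.le
    have : (binomMass n a - binomMass n (a + 1)) * (n + a + 1) = binomMass n a * (2 * a + 1) := by
      linear_combination -hstep
    have hdrop : 0 ≤ binomMass n a - binomMass n (a + 1) := by
      nlinarith [binomMass_nonneg n a]
    nlinarith [binomMass_nonneg n a, mul_nonneg hdrop (Nat.cast_nonneg a)]

lemma binomMass_zero_sub_le (n a : ℕ) :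
    binomMass n 0 - binomMass n a ≤ binomMass n 0 * a ^ 2 / (n + 1) := by
  induction a with
  | zero => simp
  | succ a ih =>
    have hdrop := binomMass_sub_binomMass_succ_le n a
    calc binomMass n 0 - binomMass n (a + 1)
        = (binomMass n 0 - binomMass n a) + (binomMass n a - binomMass n (a + 1)) := by ring
      _ ≤ binomMass n 0 * a ^ 2 / (n + 1) + binomMass n 0 * (2 * a + 1) / (n + 1) :=
        add_le_add ih hdrop
      _ = binomMass n 0 * ((a + 1 : ℕ) : ℝ) ^ 2 / (n + 1) := by push_cast; ring

lemma binomMass_zero_sq_sub_mul_le (n a b : ℕ) :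
    binomMass n 0 ^ 2 - binomMass n a * binomMass n b
      ≤ binomMass n 0 ^ 2 * (a ^ 2 + b ^ 2) / (n + 1) := by
  have hr := binomMass_nonneg n 0
  have ha := binomMass_zero_sub_le n a
  have hb := binomMass_zero_sub_le n b
  calc binomMass n 0 ^ 2 - binomMass n a * binomMass n b
      = binomMass n 0 * (binomMass n 0 - binomMass n a)
        + binomMass n a * (binomMass n 0 - binomMass n b) := by ring
    _ ≤ binomMass n 0 * (binomMass n 0 * a ^ 2 / (n + 1))
        + binomMass n 0 * (binomMass n 0 * b ^ 2 / (n + 1)) := by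
      have hb0 : 0 ≤ binomMass n 0 - binomMass n b := by
        linarith [binomMass_le_binomMass_zero n b]
      gcongr
      exact binomMass_le_binomMass_zero n a
    _ = binomMass n 0 ^ 2 * (a ^ 2 + b ^ 2) / (n + 1) := by ring

open Real.Wallis in
lemma binomMass_zero_sq_mul_W (n : ℕ) : binomMass n 0 ^ 2 * (2 * n + 1) * W n = 1 := by
  have hfact : ((2 * n).choose n : ℝ) * n.factorial * n.factorial = (2 * n).factorial := by
    have h := Nat.choose_mul_factorial_mul_factorial (show n ≤ 2 * n by omega)
    rw [show 2 * n - n = n by omega] at h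
    exact_mod_cast h
  have hc : ((2 * n).choose n : ℝ) ≠ 0 := by exact_mod_cast (Nat.choose_pos (by omega)).ne'
  rw [W_eq_factorial_ratio, binomMass, add_zero, ← hfact, show (4 : ℝ) ^ n = 2 ^ (2 * n) by
    rw [pow_mul]; norm_num]
  field_simp
  ring

open Real.Wallis in
lemma one_le_W (n : ℕ) : 1 ≤ W n := by
  induction n with
  | zero => simp [W]
  | succ n ih =>
    rw [W_succ]
    have : (1 : ℝ) ≤ (2 * n + 2) / (2 * n + 1) * ((2 * n + 2) / (2 * n + 3)) := by
      rw [div_mul_div_comm, one_le_div (by positivity)]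
      nlinarith
    nlinarith

lemma binomMass_zero_sq_mul_le_one (n : ℕ) : binomMass n 0 ^ 2 * (2 * n + 1) ≤ 1 := by
  have h := binomMass_zero_sq_mul_W n
  have := one_le_W n
  nlinarith [mul_nonneg (sq_nonneg (binomMass n 0)) (show (0 : ℝ) ≤ 2 * n + 1 by positivity)]

lemma abs_binomMass_zero_sq_sub_le (n : ℕ) :
    |binomMass n 0 ^ 2 - 2 / π / (2 * n + 1)| ≤ 1 / ((2 * n + 1) * (2 * n + 2) : ℝ) := by
  have hW := binomMass_zero_sq_mul_W n
  have hW1 := one_le_W n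
  have hWle := Real.Wallis.W_le n
  have hleW := Real.Wallis.le_W n
  have hpi := pi_pos
  have h1 : (0 : ℝ) < 2 * n + 1 := by positivity
  have h2 : (0 : ℝ) < 2 * n + 2 := by positivity
  have hdiff : binomMass n 0 ^ 2 - 2 / π / (2 * n + 1)
      = (π - 2 * Real.Wallis.W n) / ((2 * n + 1) * π * Real.Wallis.W n) := by
    rw [show binomMass n 0 ^ 2 = 1 / ((2 * n + 1) * Real.Wallis.W n) by
      field_simp; linarith]
    field_simp
  have hgap : (π - 2 * Real.Wallis.W n) * (2 * n + 2) ≤ π := by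
    rw [div_mul_eq_mul_div, div_le_iff₀ h2] at hleW
    nlinarith
  rw [hdiff, abs_of_nonneg (div_nonneg (by linarith) (by positivity)),
    div_le_div_iff₀ (by positivity) (by positivity)]
  nlinarith [mul_le_mul_of_nonneg_left hW1 hpi.le]

lemma binomMass_mul_le (n a b : ℕ) : binomMass n a * binomMass n b ≤ binomMass n 0 ^ 2 := by
  rw [sq]
  exact mul_le_mul (binomMass_le_binomMass_zero n a) (binomMass_le_binomMass_zero n b)
    (binomMass_nonneg n b) (binomMass_nonneg n 0)

lemma sq_mul_abs_binomMass_mul_sub_le (n a b : ℕ) :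
    (2 * n + 1 : ℝ) ^ 2 * |binomMass n a * binomMass n b - 2 / π / (2 * n + 1)|
      ≤ 2 * (a ^ 2 + b ^ 2) + 1 := by
  have h1 : (0 : ℝ) < 2 * n + 1 := by positivity
  have h2 : (0 : ℝ) < n + 1 := by positivity
  have hprod := binomMass_zero_sq_sub_mul_le n a b
  have hcentral := abs_binomMass_zero_sq_sub_le n
  have hr := binomMass_zero_sq_mul_le_one n
  have habs : |binomMass n a * binomMass n b - 2 / π / (2 * n + 1)|
      ≤ binomMass n 0 ^ 2 * (a ^ 2 + b ^ 2) / (n + 1) + 1 / ((2 * n + 1) * (2 * n + 2)) := by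
    calc _ = |(binomMass n a * binomMass n b - binomMass n 0 ^ 2)
            + (binomMass n 0 ^ 2 - 2 / π / (2 * n + 1))| := by ring_nf
      _ ≤ |binomMass n a * binomMass n b - binomMass n 0 ^ 2|
            + |binomMass n 0 ^ 2 - 2 / π / (2 * n + 1)| := abs_add_le _ _
      _ ≤ _ := by
        rw [abs_sub_comm, abs_of_nonneg (sub_nonneg.2 (binomMass_mul_le n a b))]
        exact add_le_add hprod hcentral
  calc (2 * n + 1 : ℝ) ^ 2 * |binomMass n a * binomMass n b - 2 / π / (2 * n + 1)|
      ≤ (2 * n + 1 : ℝ) ^ 2 *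
          (binomMass n 0 ^ 2 * (a ^ 2 + b ^ 2) / (n + 1) + 1 / ((2 * n + 1) * (2 * n + 2))) := by
        gcongr
    _ = binomMass n 0 ^ 2 * (2 * n + 1) * ((2 * n + 1) / (n + 1)) * (a ^ 2 + b ^ 2)
          + (2 * n + 1) / (2 * n + 2) := by
        field_simp
    _ ≤ 1 * 2 * (a ^ 2 + b ^ 2) + 1 := by
        gcongr
        · rw [div_le_iff₀ h2]; linarith
        · rw [div_le_one (by positivity)]; linarith
    _ = 2 * (a ^ 2 + b ^ 2) + 1 := by ring

lemma srwP_nonneg (k : ℕ) (z : ℤ × ℤ) : 0 ≤ srwP k z := by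
  rw [srwP_eq_mul]; exact mul_nonneg (srw1P_nonneg _ _) (srw1P_nonneg _ _)

lemma srwP_eq_zero_of_mod_two_ne (k : ℕ) (z : ℤ × ℤ) (h : ((k : ℤ) - (z.1 + z.2)) % 2 ≠ 0) :
    srwP k z = 0 := by
  rw [srwP_eq_mul, srw1P_eq_zero_of_mod_two_ne k _ (by omega), zero_mul]

lemma srwP_two_mul_of_mod_two_eq (n : ℕ) (z : ℤ × ℤ) (h : (z.1 + z.2) % 2 = 0) :
    srwP (2 * n) z
      = binomMass n ((z.1 + z.2) / 2).natAbs * binomMass n ((z.1 - z.2) / 2).natAbs := by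
  rw [srwP_eq_mul, srw1P_two_mul_of_mod_two_eq n _ h,
    srw1P_two_mul_of_mod_two_eq n _ (by omega)]

lemma srwP_two_mul_zero (n : ℕ) : srwP (2 * n) 0 = binomMass n 0 ^ 2 := by
  simp [srwP_two_mul_of_mod_two_eq n 0 (by simp), sq]

lemma srw1P_le (k : ℕ) (m : ℤ) : srw1P k m ≤ binomMass (k / 2) 0 := by
  have heven (n : ℕ) (m : ℤ) : srw1P (2 * n) m ≤ binomMass n 0 := by
    by_cases hm : m % 2 = 0
    · rw [srw1P_two_mul_of_mod_two_eq n m hm]; exact binomMass_le_binomMass_zero _ _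
    · rw [srw1P_eq_zero_of_mod_two_ne _ m (by push_cast; omega)]; exact binomMass_nonneg n 0
  obtain ⟨n, rfl | rfl⟩ := Nat.even_or_odd' k
  · simpa using heven n m
  · rw [show (2 * n + 1) / 2 = n by omega]
    simp only [srw1P]
    linarith [heven n (m + 1), heven n (m - 1)]

lemma srwP_le (k : ℕ) (z : ℤ × ℤ) : srwP k z ≤ binomMass (k / 2) 0 ^ 2 := by
  rw [srwP_eq_mul, sq]
  exact mul_le_mul (srw1P_le _ _) (srw1P_le _ _) (srw1P_nonneg _ _) (binomMass_nonneg _ _)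

lemma srwP_le_one_div (k : ℕ) (hk : 0 < k) (z : ℤ × ℤ) : srwP k z ≤ 1 / k := by
  have h := binomMass_zero_sq_mul_le_one (k / 2)
  have : (k : ℝ) ≤ 2 * ((k / 2 : ℕ) : ℝ) + 1 := by norm_cast; omega
  rw [le_div_iff₀ (by positivity)]
  nlinarith [srwP_le k z]

lemma tendsto_srwP_atTop (z : ℤ × ℤ) : Tendsto (fun k => srwP k z) atTop (𝓝 0) :=
  tendsto_of_tendsto_of_tendsto_of_le_of_le' tendsto_const_nhds
    tendsto_one_div_atTop_nhds_zero_nat (Eventually.of_forall fun k => srwP_nonneg k z)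
    (eventually_gt_atTop 0 |>.mono fun k hk => srwP_le_one_div k hk z)

lemma srwP_two_mul_add_srwP_succ_le (n : ℕ) (z : ℤ × ℤ) :
    srwP (2 * n) z + srwP (2 * n + 1) z ≤ srwP (2 * n) 0 := by
  rw [srwP_two_mul_zero]
  by_cases h : (z.1 + z.2) % 2 = 0
  · rw [srwP_eq_zero_of_mod_two_ne (2 * n + 1) z (by push_cast; omega), add_zero]
    simpa using srwP_le (2 * n) z
  · rw [srwP_eq_zero_of_mod_two_ne (2 * n) z (by push_cast; omega), zero_add]
    simpa [show (2 * n + 1) / 2 = n by omega] using srwP_le (2 * n + 1) z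

lemma sum_range_srwP_zero_sub_nonneg (z : ℤ × ℤ) (N : ℕ) :
    0 ≤ ∑ k ∈ range N, (srwP k 0 - srwP k z) := by
  have hodd (n : ℕ) : srwP (2 * n + 1) 0 = 0 :=
    srwP_eq_zero_of_mod_two_ne _ _ (by simp)
  have hpair (n : ℕ) := srwP_two_mul_add_srwP_succ_le n z
  have heven (n : ℕ) : 0 ≤ ∑ k ∈ range (2 * n), (srwP k 0 - srwP k z) := by
    induction n with
    | zero => simp
    | succ n ih =>
      rw [show 2 * (n + 1) = 2 * n + 1 + 1 by ring, sum_range_succ, sum_range_succ, hodd]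
      linarith [hpair n]
  obtain ⟨n, rfl | rfl⟩ := Nat.even_or_odd' N
  · exact heven n
  · rw [sum_range_succ]
    linarith [heven n, hpair n, srwP_nonneg (2 * n + 1) z]

noncomputable def srwMainTerm (z : ℤ × ℤ) (k : ℕ) : ℝ :=
  if ((k : ℤ) - (z.1 + z.2)) % 2 = 0 then 2 / π / (k + 1) else 0

noncomputable def srwErr (z : ℤ × ℤ) (k : ℕ) : ℝ := srwP k z - srwMainTerm z k

lemma sq_mul_abs_srwErr_two_mul_le (z : ℤ × ℤ) : ∃ B, ∀ n : ℕ,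
    (2 * n + 1 : ℝ) ^ 2 * |srwErr z (2 * n)| ≤ B := by
  by_cases h : (z.1 + z.2) % 2 = 0
  · refine ⟨2 * (((z.1 + z.2) / 2).natAbs ^ 2 + ((z.1 - z.2) / 2).natAbs ^ 2 : ℕ) + 1,
      fun n => ?_⟩
    rw [srwErr, srwMainTerm, if_pos (by push_cast; omega), srwP_two_mul_of_mod_two_eq n z h]
    push_cast
    exact sq_mul_abs_binomMass_mul_sub_le n _ _
  · refine ⟨0, fun n => ?_⟩
    rw [srwErr, srwMainTerm, if_neg (by push_cast; omega),
      srwP_eq_zero_of_mod_two_ne _ z (by push_cast; omega)]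
    simp

lemma srwErr_succ_sub_neighborMean (z : ℤ × ℤ) (k : ℕ) :
    srwErr z (k + 1) - neighborMean (fun w => srwErr w k) z
      = if ((k + 1 : ℕ) - (z.1 + z.2) : ℤ) % 2 = 0 then 2 / π / (k + 1) - 2 / π / (k + 2)
        else 0 := by
  simp only [srwErr, srwMainTerm, neighborMean, srwP_succ, Prod.fst_add, Prod.snd_add,
    Prod.fst_sub, Prod.snd_sub]
  push_cast
  split_ifs <;> first | omega | ring

lemma abs_neighborMean_le (f : ℤ × ℤ → ℝ) (z : ℤ × ℤ) :
    |neighborMean f z| ≤ neighborMean (fun w => |f w|) z := by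
  unfold neighborMean
  rw [abs_div, abs_of_pos (by norm_num : (0 : ℝ) < 4)]
  gcongr
  linarith [abs_add_le (f (z + (1, 0)) + f (z - (1, 0)) + f (z + (0, 1))) (f (z - (0, 1))),
    abs_add_le (f (z + (1, 0)) + f (z - (1, 0))) (f (z + (0, 1))),
    abs_add_le (f (z + (1, 0))) (f (z - (1, 0)))]

lemma neighborMean_mono {f g : ℤ × ℤ → ℝ} (h : ∀ w, f w ≤ g w) (z : ℤ × ℤ) :
    neighborMean f z ≤ neighborMean g z := by
  unfold neighborMean
  gcongr <;> apply h

lemma sq_mul_abs_srwErr_succ_le (z : ℤ × ℤ) (k : ℕ) :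
    (k + 2 : ℝ) ^ 2 * |srwErr z (k + 1)|
      ≤ 4 * neighborMean (fun w => (k + 1 : ℝ) ^ 2 * |srwErr w k|) z + 2 := by
  have h1 : (0 : ℝ) < k + 1 := by positivity
  have hC : 2 / π ≤ 1 := by rw [div_le_one pi_pos]; linarith [pi_gt_three]
  have hdrift : |srwErr z (k + 1) - neighborMean (fun w => srwErr w k) z|
      ≤ 2 / π / ((k + 1) * (k + 2)) := by
    rw [srwErr_succ_sub_neighborMean]
    have : 2 / π / (k + 1) - 2 / π / (k + 2) = 2 / π / ((k + 1) * (k + 2)) := by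
      field_simp; ring
    split_ifs
    · rw [this, abs_of_nonneg (by positivity)]
    · simp only [abs_zero]; positivity
  have hmean : neighborMean (fun w => (k + 1 : ℝ) ^ 2 * |srwErr w k|) z
      = (k + 1 : ℝ) ^ 2 * neighborMean (fun w => |srwErr w k|) z := by
    unfold neighborMean; ring
  have habs : |srwErr z (k + 1)|
      ≤ neighborMean (fun w => |srwErr w k|) z + 2 / π / ((k + 1) * (k + 2)) := by
    linarith [abs_sub_abs_le_abs_sub (srwErr z (k + 1)) (neighborMean (fun w => srwErr w k) z),
      abs_neighborMean_le (fun w => srwErr w k) z]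
  have hM : 0 ≤ neighborMean (fun w => |srwErr w k|) z := by unfold neighborMean; positivity
  calc (k + 2 : ℝ) ^ 2 * |srwErr z (k + 1)|
      ≤ (k + 2 : ℝ) ^ 2 * neighborMean (fun w => |srwErr w k|) z
        + 2 / π * ((k + 2) / (k + 1)) := by
        rw [show 2 / π * ((k + 2) / (k + 1)) = (k + 2 : ℝ) ^ 2 * (2 / π / ((k + 1) * (k + 2))) by
          field_simp, ← mul_add]
        gcongr
    _ ≤ 4 * ((k + 1 : ℝ) ^ 2 * neighborMean (fun w => |srwErr w k|) z) + 1 * 2 := by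
        have hk : (k + 2 : ℝ) ^ 2 ≤ 4 * (k + 1) ^ 2 := by nlinarith
        have hratio : (k + 2 : ℝ) / (k + 1) ≤ 2 := by rw [div_le_iff₀ h1]; linarith
        gcongr ?_ + ?_
        · nlinarith
        · exact mul_le_mul hC hratio (by positivity) zero_le_one
    _ = _ := by rw [hmean]; ring

lemma sq_mul_abs_srwErr_le (z : ℤ × ℤ) : ∃ B, ∀ k : ℕ, (k + 1 : ℝ) ^ 2 * |srwErr z k| ≤ B := by
  choose B hB using sq_mul_abs_srwErr_two_mul_le
  refine ⟨max (B z) (4 * neighborMean B z + 2), fun k => ?_⟩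
  obtain ⟨n, rfl | rfl⟩ := Nat.even_or_odd' k
  · exact le_max_of_le_left (by simpa using hB z n)
  · refine le_max_of_le_right ((sq_mul_abs_srwErr_succ_le z (2 * n)).trans' ?_ |>.trans ?_)
    · exact le_of_eq (by push_cast; ring)
    · gcongr
      exact neighborMean_mono (fun w => by simpa using hB w n) z

lemma summable_srwErr (z : ℤ × ℤ) : Summable (srwErr z) := by
  obtain ⟨B, hB⟩ := sq_mul_abs_srwErr_le z
  have hp : Summable fun k : ℕ => B * (1 / ((k : ℝ) + 1) ^ 2) :=
    ((summable_nat_add_iff 1).2 (Real.summable_one_div_nat_pow.2 one_lt_two)).mul_left B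
      |>.congr fun k => by push_cast; rfl
  refine Summable.of_norm_bounded hp fun k => ?_
  rw [Real.norm_eq_abs, mul_one_div, le_div_iff₀ (by positivity), mul_comm]
  exact hB k

lemma exists_tendsto_sum_alternating_inv :
    ∃ l, Tendsto (fun N => ∑ k ∈ range N, (-1) ^ k * (2 / π / (k + 1))) atTop (𝓝 l) := by
  refine Antitone.tendsto_alternating_series_of_tendsto_zero
    (antitone_nat_of_succ_le fun k => ?_) ?_
  · gcongr; simp
  · simpa [div_eq_mul_inv] using tendsto_one_div_add_atTop_nhds_zero_nat.const_mul (2 / π)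

lemma exists_tendsto_sum_srwMainTerm_sub (z : ℤ × ℤ) :
    ∃ l, Tendsto (fun N => ∑ k ∈ range N, (srwMainTerm 0 k - srwMainTerm z k)) atTop (𝓝 l) := by
  by_cases h : (z.1 + z.2) % 2 = 0
  · refine ⟨0, tendsto_const_nhds.congr fun N => (sum_eq_zero fun k _ => ?_).symm⟩
    simp only [srwMainTerm, Prod.fst_zero, Prod.snd_zero, add_zero, sub_zero]
    split_ifs <;> first | omega | ring
  · obtain ⟨l, hl⟩ := exists_tendsto_sum_alternating_inv
    refine ⟨l, hl.congr fun N => sum_congr rfl fun k _ => ?_⟩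
    simp only [srwMainTerm, Prod.fst_zero, Prod.snd_zero, add_zero, sub_zero]
    rcases Nat.even_or_odd k with hk | hk
    · rw [hk.neg_one_pow, if_pos (by obtain ⟨j, rfl⟩ := hk; push_cast; omega),
        if_neg (by obtain ⟨j, rfl⟩ := hk; push_cast; omega)]
      ring
    · rw [hk.neg_one_pow, if_neg (by obtain ⟨j, rfl⟩ := hk; push_cast; omega),
        if_pos (by obtain ⟨j, rfl⟩ := hk; push_cast; omega)]
      ring

lemma exists_tendsto_sum_srwP_zero_sub (z : ℤ × ℤ) :
    ∃ l, Tendsto (fun N => ∑ k ∈ range N, (srwP k 0 - srwP k z)) atTop (𝓝 l) := by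
  obtain ⟨l, hl⟩ := exists_tendsto_sum_srwMainTerm_sub z
  refine ⟨_, (((summable_srwErr 0).hasSum.tendsto_sum_nat.sub
    (summable_srwErr z).hasSum.tendsto_sum_nat).add hl).congr fun N => ?_⟩
  simp only [← sum_sub_distrib, ← sum_add_distrib, srwErr]
  exact sum_congr rfl fun k _ => by ring

noncomputable def potentialKernel (z : ℤ × ℤ) : ℝ :=
  limUnder atTop fun N => ∑ k ∈ range N, (srwP k 0 - srwP k z)

lemma tendsto_potentialKernel (z : ℤ × ℤ) :
    Tendsto (fun N => ∑ k ∈ range N, (srwP k 0 - srwP k z)) atTop (𝓝 (potentialKernel z)) :=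
  tendsto_nhds_limUnder (exists_tendsto_sum_srwP_zero_sub z)

lemma potentialKernel_nonneg (z : ℤ × ℤ) : 0 ≤ potentialKernel z :=
  ge_of_tendsto' (tendsto_potentialKernel z) (sum_range_srwP_zero_sub_nonneg z)

lemma potentialKernel_zero : potentialKernel 0 = 0 :=
  tendsto_nhds_unique (tendsto_potentialKernel 0) (by simp)

lemma Filter.Tendsto.neighborMean {α : Type*} {l : Filter α} {F : α → ℤ × ℤ → ℝ}
    {f : ℤ × ℤ → ℝ} (h : ∀ w, Tendsto (fun a => F a w) l (𝓝 (f w))) (z : ℤ × ℤ) :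
    Tendsto (fun a => neighborMean (F a) z) l (𝓝 (neighborMean f z)) :=
  ((((h _).add (h _)).add (h _)).add (h _)).div_const 4

lemma neighborMean_sum_range_srwP_zero_sub (z : ℤ × ℤ) (N : ℕ) :
    neighborMean (fun w => ∑ k ∈ range N, (srwP k 0 - srwP k w)) z
      = ∑ k ∈ range N, (srwP k 0 - srwP k z) + srwP 0 z - srwP N z := by
  have hstep (k : ℕ) : srwP k 0 - neighborMean (srwP k) z
      = (srwP k 0 - srwP k z) + (srwP k z - srwP (k + 1) z) := by
    rw [srwP_succ]; ring
  calc _ = ∑ k ∈ range N, (srwP k 0 - neighborMean (srwP k) z) := by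
        simp only [neighborMean, ← sum_add_distrib, sum_div]
        exact sum_congr rfl fun k _ => by ring
    _ = _ := by
        rw [sum_congr rfl fun k _ => hstep k, sum_add_distrib, sum_range_sub']
        ring

lemma neighborMean_potentialKernel {z : ℤ × ℤ} (hz : z ≠ 0) :
    neighborMean potentialKernel z = potentialKernel z := by
  have hlim := Tendsto.neighborMean tendsto_potentialKernel z
  simp only [neighborMean_sum_range_srwP_zero_sub] at hlim
  have h0 : srwP 0 z = 0 := if_neg hz
  refine tendsto_nhds_unique hlim ?_
  simpa [h0] using ((tendsto_potentialKernel z).add_const (srwP 0 z)).sub (tendsto_srwP_atTop z)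

/-- **Section 4.3.5 (the potential kernel of simple random walk on `ℤ²`).**
There is `C > 0` such that
`ℙ_{(x,y)}[X_k = 0] = 1_{k ≡ x+y (mod 2)}·C/(k+1) + ε_{(x,y)}(k)` with
`sup_k k²|ε_{(x,y)}(k)| < ∞`; consequently
`φ(z) = lim_N Σ_{k=0}^N (ℙ_0(X_k=0) − ℙ_z(X_k=0))` exists, is nonnegative,
vanishes at the origin and is harmonic on `ℤ² \ {0}`. -/
theorem stmt16 :
    ∃ C : ℝ, 0 < C ∧
      (∀ z : ℤ × ℤ, ∃ B : ℝ, ∀ k : ℕ,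
        (k : ℝ) ^ 2 *
            |srwP k z - (if ((k : ℤ) - (z.1 + z.2)) % 2 = 0 then C / (k + 1) else 0)|
          ≤ B) ∧
      ∃ φ : ℤ × ℤ → ℝ,
        (∀ z : ℤ × ℤ,
          Tendsto (fun N => ∑ k ∈ Finset.range (N + 1), (srwP k 0 - srwP k z))
            atTop (𝓝 (φ z))) ∧
        (∀ z, 0 ≤ φ z) ∧ φ 0 = 0 ∧
        ∀ z : ℤ × ℤ, z ≠ 0 →
          (φ (z + (1, 0)) + φ (z - (1, 0)) + φ (z + (0, 1)) + φ (z - (0, 1))) / 4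
            = φ z := by
  refine ⟨2 / π, by positivity, fun z => ?_, potentialKernel,
    fun z => (tendsto_potentialKernel z).comp (tendsto_add_atTop_nat 1),
    potentialKernel_nonneg, potentialKernel_zero, fun z hz => neighborMean_potentialKernel hz⟩
  obtain ⟨B, hB⟩ := sq_mul_abs_srwErr_le z
  exact ⟨B, fun k => (mul_le_mul_of_nonneg_right (by gcongr; linarith) (abs_nonneg _)).trans
    (hB k)⟩
end

section
/- Let (X_n) be a recurrent Markov chain on countable E with laws (ℙ_x), and let (ψ_r(X_n)·r^{L_{n-1}^{x₀}})_{n≥0} be the positive martingale of Proposition 4.1.1, defining the finite measure μ_x^{(r)} on 𝓕_∞ by μ_x^{(r)}|_{𝓕_n} = ψ_r(X_n)·r^{L_{n-1}^{x₀}}·ℙ_x|_{𝓕_n}. Then for every σ ∈ (0, 1/r): μ_x^{(r)}(σ^{L_{n-1}^{x₀}}) ≤ max((1−σr)/(σ(1−r)), 1)·ψ_{σr}(x) for all n ≥ 1, and consequently μ_x^{(r)}(σ^{L_∞^{x₀}}) < ∞ and L_∞^{x₀} < ∞ μ_x^{(r)}-almost surely. -/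
/-!
Under `ℙ_x`, `ψ_ρ(X_n) ρ^{L_{n-1}}` has constant expectation `ψ_ρ(x)` for every `ρ ∈ (0, 1)`:
one step of the chain preserves it because `ψ_ρ` is harmonic off `x₀`, while at `x₀` the extra
factor `ρ` exactly compensates `ψ_ρ(x₀) = ρ/(1-ρ) 𝔼_{x₀}[φ(X_1)]`. Since `σ^{L_{n-1}}` is
`𝓕_n`-measurable, its `μ_x^{(r)}`-integral is `𝔼_x[ψ_r(X_n)(σr)^{L_{n-1}}]`, and the pointwise bound
`ψ_r ≤ max((1-σr)/(σ(1-r)), 1) ψ_{σr}` reduces it to the constant expectation with `ρ = σr`.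
Taking `σ > 1` and letting `n → ∞` by monotone convergence, `σ^{L_∞}` is `μ_x^{(r)}`-integrable,
so `L_∞ < ∞` almost surely.
-/

open MeasureTheory Filter Topology

open scoped ENNReal

section

variable {E Ω : Type*}

/-- `L_{n-1}^{x₀}`: the number of visits to `x₀` at the times `0, …, n - 1`. -/
def visits [DecidableEq E] (X : ℕ → Ω → E) (x₀ : E) (n : ℕ) (ω : Ω) : ℕ :=
  ∑ m ∈ Finset.range n, if X m ω = x₀ then 1 else 0

/-- `ψ_ρ`, with `∑' z, p x₀ z * φ z` standing for `𝔼_{x₀}[φ(X_1)]`. -/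
noncomputable def psi (p : E → E → ℝ) (x₀ : E) (φ : E → ℝ) (ρ : ℝ) (y : E) : ℝ :=
  ρ / (1 - ρ) * (∑' z, p x₀ z * φ z) + φ y

def pathUpTo (X : ℕ → Ω → E) (n : ℕ) (ω : Ω) : Fin (n + 1) → E := fun i => X i ω

end

section MarkovChain

variable {E Ω : Type*} [MeasurableSpace Ω] {X : ℕ → Ω → E} {ℙx : Measure Ω}
  {p : E → E → ℝ} {x : E}

theorem measure_pathUpTo_preimage [DecidableEq E]
    (hchain : ∀ (n : ℕ) (s : ℕ → E), ℙx {ω | ∀ i ≤ n, X i ω = s i}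
      = (if s 0 = x then 1 else 0) * ∏ i ∈ Finset.range n, ENNReal.ofReal (p (s i) (s (i + 1))))
    (n : ℕ) (v : Fin (n + 1) → E) :
    ℙx (pathUpTo X n ⁻¹' {v})
      = (if v 0 = x then 1 else 0) * ∏ i : Fin n, ENNReal.ofReal (p (v i.castSucc) (v i.succ)) := by
  set s : ℕ → E := fun i => v ⟨min i n, by omega⟩
  have hs : ∀ i : Fin (n + 1), s i = v i := fun i => by
    simp [s, Nat.min_eq_left (Nat.lt_succ_iff.1 i.isLt)]
  have hset : pathUpTo X n ⁻¹' {v} = {ω | ∀ i ≤ n, X i ω = s i} := by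
    ext ω
    simp only [Set.mem_preimage, Set.mem_singleton_iff, funext_iff, pathUpTo]
    exact ⟨fun h i hi => (h ⟨i, by omega⟩).trans (hs ⟨i, by omega⟩).symm,
      fun h i => (h i (by omega)).trans (hs i)⟩
  rw [hset, hchain, ← Fin.prod_univ_eq_prod_range (fun i => ENNReal.ofReal (p (s i) (s (i + 1))))]
  simp only [← hs]
  rfl

theorem measure_pathUpTo_preimage_snoc [DecidableEq E]
    (hchain : ∀ (n : ℕ) (s : ℕ → E), ℙx {ω | ∀ i ≤ n, X i ω = s i}
      = (if s 0 = x then 1 else 0) * ∏ i ∈ Finset.range n, ENNReal.ofReal (p (s i) (s (i + 1))))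
    (n : ℕ) (v : Fin (n + 1) → E) (z : E) :
    ℙx (pathUpTo X (n + 1) ⁻¹' {Fin.snoc v z})
      = ℙx (pathUpTo X n ⁻¹' {v}) * ENNReal.ofReal (p (v (Fin.last n)) z) := by
  rw [measure_pathUpTo_preimage hchain, measure_pathUpTo_preimage hchain, Fin.prod_univ_castSucc,
    mul_assoc]
  simp [Fin.succ_castSucc, -Fin.castSucc_succ]

theorem lintegral_comp_pathUpTo [Countable E] [MeasurableSpace E] [MeasurableSingletonClass E]
    (hX : ∀ n, Measurable (X n)) (n : ℕ) (F : (Fin (n + 1) → E) → ℝ≥0∞) :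
    ∫⁻ ω, F (pathUpTo X n ω) ∂ℙx = ∑' v, F v * ℙx (pathUpTo X n ⁻¹' {v}) := by
  have hpath : Measurable (pathUpTo X n) := measurable_pi_lambda _ fun i => hX i
  rw [← lintegral_map (measurable_of_countable F) hpath, lintegral_countable']
  simp only [Measure.map_apply hpath (measurableSet_singleton _)]

theorem lintegral_comp_pathUpTo_mul_comp_succ [DecidableEq E] [Countable E] [MeasurableSpace E]
    [MeasurableSingletonClass E] (hX : ∀ n, Measurable (X n))
    (hchain : ∀ (n : ℕ) (s : ℕ → E), ℙx {ω | ∀ i ≤ n, X i ω = s i}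
      = (if s 0 = x then 1 else 0) * ∏ i ∈ Finset.range n, ENNReal.ofReal (p (s i) (s (i + 1))))
    (n : ℕ) (F : (Fin (n + 1) → E) → ℝ≥0∞) (h : E → ℝ≥0∞) :
    ∫⁻ ω, F (pathUpTo X n ω) * h (X (n + 1) ω) ∂ℙx
      = ∫⁻ ω, F (pathUpTo X n ω) * ∑' z, ENNReal.ofReal (p (X n ω) z) * h z ∂ℙx := by
  have hlhs : ∫⁻ ω, F (pathUpTo X n ω) * h (X (n + 1) ω) ∂ℙx = _ :=
    lintegral_comp_pathUpTo hX (n + 1) fun w => F (Fin.init w) * h (w (Fin.last _))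
  have hrhs : ∫⁻ ω, F (pathUpTo X n ω) * ∑' z, ENNReal.ofReal (p (X n ω) z) * h z ∂ℙx = _ :=
    lintegral_comp_pathUpTo hX n fun v => F v * ∑' z, ENNReal.ofReal (p (v (Fin.last n)) z) * h z
  rw [hlhs, hrhs, ← (Fin.snocEquiv fun _ => E).tsum_eq, ENNReal.tsum_prod', ENNReal.tsum_comm]
  refine tsum_congr fun v => ?_
  simp only [← ENNReal.tsum_mul_left, ← ENNReal.tsum_mul_right]
  refine tsum_congr fun z => ?_
  change F (Fin.init (Fin.snoc (α := fun _ => E) v z))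
    * h (Fin.snoc (α := fun _ => E) v z (Fin.last _))
    * ℙx (pathUpTo X (n + 1) ⁻¹' {Fin.snoc v z}) = _
  rw [Fin.init_snoc, Fin.snoc_last, measure_pathUpTo_preimage_snoc hchain]
  ring

end MarkovChain

section Potential

variable {E : Type*} {p : E → E → ℝ} {x₀ : E} {φ : E → ℝ} {ρ : ℝ}

theorem psi_nonneg (hp0 : ∀ y z, 0 ≤ p y z) (hφ0 : ∀ y, 0 ≤ φ y) (hρ0 : 0 ≤ ρ) (hρ1 : ρ < 1)
    (y : E) : 0 ≤ psi p x₀ φ ρ y :=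
  add_nonneg (mul_nonneg (div_nonneg hρ0 (by linarith))
    (tsum_nonneg fun z => mul_nonneg (hp0 _ _) (hφ0 z))) (hφ0 y)

theorem summable_mul_of_finite (hfin : ∀ y, {z | p y z ≠ 0}.Finite) (y : E) (g : E → ℝ) :
    Summable fun z => p y z * g z :=
  summable_of_hasFiniteSupport ((hfin y).subset (Function.support_mul_subset_left _ _))

theorem pow_ite_mul_tsum_mul_psi [DecidableEq E] (hp1 : ∀ y, ∑' z, p y z = 1)
    (hfin : ∀ y, {z | p y z ≠ 0}.Finite) (hφx₀ : φ x₀ = 0)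
    (hharm : ∀ y, y ≠ x₀ → ∑' z, p y z * φ z = φ y) (hρ1 : ρ < 1) (y : E) :
    ρ ^ (if y = x₀ then 1 else 0) * ∑' z, p y z * psi p x₀ φ ρ z = psi p x₀ φ ρ y := by
  have hmean : ∑' z, p y z * psi p x₀ φ ρ z
      = ρ / (1 - ρ) * (∑' z, p x₀ z * φ z) + ∑' z, p y z * φ z := by
    simp only [psi, mul_add]
    rw [(summable_mul_of_finite hfin y _).tsum_add (summable_mul_of_finite hfin y φ)]
    rw [tsum_mul_right, hp1, one_mul]
  rw [hmean]
  by_cases hy : y = x₀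
  · subst hy
    have : 1 - ρ ≠ 0 := by linarith
    simp only [psi, hφx₀, if_true, pow_one, add_zero]
    field_simp
    ring
  · simp [psi, hy, hharm y hy]

end Potential

section Visits

variable {E Ω : Type*} [DecidableEq E] {X : ℕ → Ω → E} {x₀ : E}

theorem visits_succ (n : ℕ) (ω : Ω) :
    visits X x₀ (n + 1) ω = visits X x₀ n ω + if X n ω = x₀ then 1 else 0 :=
  Finset.sum_range_succ _ _

theorem visits_succ_eq_sum_pathUpTo (n : ℕ) (ω : Ω) :
    visits X x₀ (n + 1) ω = ∑ i, if pathUpTo X n ω i = x₀ then 1 else 0 :=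
  (Fin.sum_univ_eq_sum_range (fun m => if X m ω = x₀ then 1 else 0) (n + 1)).symm

theorem measurable_visits [MeasurableSpace E] [MeasurableSingletonClass E]
    {m : MeasurableSpace Ω} {n : ℕ} (hX : ∀ k < n, Measurable[m] (X k)) :
    Measurable[m] (visits X x₀ n) :=
  Finset.measurable_sum _ fun k hk => Measurable.ite
    (hX k (Finset.mem_range.1 hk) (measurableSet_singleton x₀)) measurable_const measurable_const

theorem measurable_ofReal_pow_visits [MeasurableSpace E] [MeasurableSingletonClass E]
    [MeasurableSpace Ω] (hX : ∀ n, Measurable (X n)) (τ : ℝ) (n : ℕ) :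
    Measurable fun ω => ENNReal.ofReal (τ ^ visits X x₀ n ω) :=
  ENNReal.measurable_ofReal.comp ((measurable_of_countable _).comp
    (measurable_visits fun k _ => hX k))

theorem visits_eq_count (n : ℕ) (ω : Ω) : visits X x₀ n ω = Nat.count (fun m => X m ω = x₀) n := by
  simp [visits, Nat.count_eq_card_filter_range]

theorem iSup_ofReal_pow_visits_eq_top {τ : ℝ} (hτ : 1 < τ) {ω : Ω}
    (hinf : {m | X m ω = x₀}.Infinite) : ⨆ n, ENNReal.ofReal (τ ^ visits X x₀ n ω) = ⊤ := by
  refine iSup_eq_top.2 fun b hb => ?_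
  obtain ⟨k, hk⟩ := pow_unbounded_of_one_lt b.toReal hτ
  refine ⟨Nat.nth (fun m => X m ω = x₀) k, ?_⟩
  rw [visits_eq_count, Nat.count_nth_of_infinite hinf, ENNReal.lt_ofReal_iff_toReal_lt hb.ne]
  exact hk

theorem lintegral_iSup_pow_visits_lt_top [MeasurableSpace E] [MeasurableSingletonClass E]
    [MeasurableSpace Ω] {μ : Measure Ω} (hX : ∀ n, Measurable (X n)) {τ : ℝ} (hτ : 1 ≤ τ)
    {B : ℝ} (hB : ∀ n, ∫⁻ ω, ENNReal.ofReal (τ ^ visits X x₀ n ω) ∂μ ≤ ENNReal.ofReal B) :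
    ∫⁻ ω, ⨆ n, ENNReal.ofReal (τ ^ visits X x₀ n ω) ∂μ < ⊤ := by
  have hmono : Monotone fun n ω => ENNReal.ofReal (τ ^ visits X x₀ n ω) := fun a b hab ω => by
    simp only [visits_eq_count]
    exact ENNReal.ofReal_le_ofReal (pow_le_pow_right₀ hτ (Nat.count_monotone _ hab))
  rw [lintegral_iSup (measurable_ofReal_pow_visits hX τ) hmono]
  exact (iSup_le hB).trans_lt ENNReal.ofReal_lt_top

end Visits

theorem lintegral_psi_mul_pow_visits {E Ω : Type*} [DecidableEq E] [Countable E]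
    [MeasurableSpace E] [MeasurableSingletonClass E] [MeasurableSpace Ω]
    {X : ℕ → Ω → E} {ℙx : Measure Ω} {p : E → E → ℝ} {x x₀ : E} {φ : E → ℝ} {ρ : ℝ}
    (hX : ∀ n, Measurable (X n)) (hp0 : ∀ y z, 0 ≤ p y z) (hp1 : ∀ y, ∑' z, p y z = 1)
    (hfin : ∀ y, {z | p y z ≠ 0}.Finite)
    (hchain : ∀ (n : ℕ) (s : ℕ → E), ℙx {ω | ∀ i ≤ n, X i ω = s i}
      = (if s 0 = x then 1 else 0) * ∏ i ∈ Finset.range n, ENNReal.ofReal (p (s i) (s (i + 1))))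
    (hφ0 : ∀ y, 0 ≤ φ y) (hφx₀ : φ x₀ = 0) (hharm : ∀ y, y ≠ x₀ → ∑' z, p y z * φ z = φ y)
    (hρ0 : 0 ≤ ρ) (hρ1 : ρ < 1) (n : ℕ) :
    ∫⁻ ω, ENNReal.ofReal (psi p x₀ φ ρ (X n ω) * ρ ^ visits X x₀ n ω) ∂ℙx
      = ENNReal.ofReal (psi p x₀ φ ρ x) := by
  have hψ := psi_nonneg (x₀ := x₀) hp0 hφ0 hρ0 hρ1
  induction n with
  | zero =>
    simp only [visits, Finset.range_zero, Finset.sum_empty, pow_zero, mul_one]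
    have hpath : ∫⁻ ω, ENNReal.ofReal (psi p x₀ φ ρ (X 0 ω)) ∂ℙx = _ :=
      lintegral_comp_pathUpTo hX 0 fun v => ENNReal.ofReal (psi p x₀ φ ρ (v 0))
    rw [hpath, tsum_eq_single (fun _ => x)]
    · simp [measure_pathUpTo_preimage hchain]
    · intro v hv
      have : v 0 ≠ x := fun h => hv (funext fun i => by rwa [Fin.fin_one_eq_zero i])
      simp [measure_pathUpTo_preimage hchain, this]
  | succ n ih =>
    rw [← ih]
    let F : (Fin (n + 1) → E) → ℝ≥0∞ := fun v =>
      ENNReal.ofReal (ρ ^ ∑ i, if v i = x₀ then 1 else 0)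
    calc ∫⁻ ω, ENNReal.ofReal (psi p x₀ φ ρ (X (n + 1) ω) * ρ ^ visits X x₀ (n + 1) ω) ∂ℙx
        = ∫⁻ ω, F (pathUpTo X n ω) * ENNReal.ofReal (psi p x₀ φ ρ (X (n + 1) ω)) ∂ℙx := by
          refine lintegral_congr fun ω => ?_
          rw [ENNReal.ofReal_mul (hψ _), mul_comm, visits_succ_eq_sum_pathUpTo]
      _ = ∫⁻ ω, F (pathUpTo X n ω)
            * ∑' z, ENNReal.ofReal (p (X n ω) z) * ENNReal.ofReal (psi p x₀ φ ρ z) ∂ℙx :=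
          lintegral_comp_pathUpTo_mul_comp_succ hX hchain n F
            fun z => ENNReal.ofReal (psi p x₀ φ ρ z)
      _ = ∫⁻ ω, ENNReal.ofReal (psi p x₀ φ ρ (X n ω) * ρ ^ visits X x₀ n ω) ∂ℙx := by
          refine lintegral_congr fun ω => ?_
          simp only [F, ← visits_succ_eq_sum_pathUpTo, visits_succ, pow_add]
          simp_rw [← ENNReal.ofReal_mul (hp0 _ _)]
          rw [← ENNReal.ofReal_tsum_of_nonneg (fun z => mul_nonneg (hp0 _ _) (hψ z))
              (summable_mul_of_finite hfin _ _), ENNReal.ofReal_mul (by positivity), mul_assoc,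
            ← ENNReal.ofReal_mul (by positivity),
            pow_ite_mul_tsum_mul_psi hp1 hfin hφx₀ hharm hρ1, ← ENNReal.ofReal_mul (by positivity),
            mul_comm]

theorem psi_le_max_mul_psi {E : Type*} {p : E → E → ℝ} {x₀ : E} {φ : E → ℝ} {r σ : ℝ}
    (hp0 : ∀ y z, 0 ≤ p y z) (hφ0 : ∀ y, 0 ≤ φ y) (hr0 : 0 < r) (hr1 : r < 1) (hσ0 : 0 < σ)
    (hσr : σ * r < 1) (y : E) :
    psi p x₀ φ r y ≤ max ((1 - σ * r) / (σ * (1 - r))) 1 * psi p x₀ φ (σ * r) y := by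
  set C := max ((1 - σ * r) / (σ * (1 - r))) 1
  have hS : 0 ≤ ∑' z, p x₀ z * φ z := tsum_nonneg fun z => mul_nonneg (hp0 _ _) (hφ0 z)
  have hcoef : r / (1 - r) ≤ C * (σ * r / (1 - σ * r)) := calc
    r / (1 - r) = (1 - σ * r) / (σ * (1 - r)) * (σ * r / (1 - σ * r)) := by
      have : 1 - r * σ ≠ 0 := by linarith
      have : 1 - r ≠ 0 := by linarith
      field_simp
    _ ≤ C * (σ * r / (1 - σ * r)) :=
      mul_le_mul_of_nonneg_right (le_max_left _ _) (div_nonneg (by positivity) (by linarith))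
  calc psi p x₀ φ r y
      ≤ C * (σ * r / (1 - σ * r)) * (∑' z, p x₀ z * φ z) + C * φ y :=
        add_le_add (mul_le_mul_of_nonneg_right hcoef hS) (le_mul_of_one_le_left (hφ0 y)
          (le_max_right _ _))
    _ = C * psi p x₀ φ (σ * r) y := by rw [psi]; ring

theorem lintegral_eq_lintegral_mul_of_forall_measurableSet {Ω : Type*} {m m0 : MeasurableSpace Ω}
    (hm : m ≤ m0) {μ ν : Measure Ω} {D g : Ω → ℝ≥0∞} (hD : Measurable D)
    (hμ : ∀ A, MeasurableSet[m] A → μ A = ∫⁻ ω in A, D ω ∂ν) (hg : Measurable[m] g) :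
    ∫⁻ ω, g ω ∂μ = ∫⁻ ω, D ω * g ω ∂ν := by
  have htrim : μ.trim hm = (ν.withDensity D).trim hm := by
    refine @Measure.ext _ m _ _ fun A hA => ?_
    rw [trim_measurableSet_eq hm hA, trim_measurableSet_eq hm hA, withDensity_apply _ (hm A hA),
      hμ A hA]
  rw [← lintegral_trim hm hg, htrim, lintegral_trim hm hg,
    lintegral_withDensity_eq_lintegral_mul _ hD (hg.mono hm le_rfl)]
  rfl


theorem lintegral_pow_visits_le {E Ω : Type*} [DecidableEq E] [Countable E] [MeasurableSpace E]
    [MeasurableSingletonClass E] [m0 : MeasurableSpace Ω] {X : ℕ → Ω → E} {x₀ : E}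
    {μ ℙx : Measure Ω} {p : E → E → ℝ} {x : E} {φ : E → ℝ} {r σ : ℝ}
    {𝓕 : Filtration ℕ m0} (hX : ∀ n, Measurable (X n)) (hp0 : ∀ y z, 0 ≤ p y z)
    (hp1 : ∀ y, ∑' z, p y z = 1) (hfin : ∀ y, {z | p y z ≠ 0}.Finite)
    (hchain : ∀ (n : ℕ) (s : ℕ → E), ℙx {ω | ∀ i ≤ n, X i ω = s i}
      = (if s 0 = x then 1 else 0) * ∏ i ∈ Finset.range n, ENNReal.ofReal (p (s i) (s (i + 1))))
    (hφ0 : ∀ y, 0 ≤ φ y) (hφx₀ : φ x₀ = 0) (hharm : ∀ y, y ≠ x₀ → ∑' z, p y z * φ z = φ y)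
    (h𝓕 : ∀ n, 𝓕 n = ⨆ i ≤ n, MeasurableSpace.comap (X i) inferInstance)
    (hμ : ∀ (n : ℕ) (A : Set Ω), MeasurableSet[𝓕 n] A →
      μ A = ∫⁻ ω in A, ENNReal.ofReal (psi p x₀ φ r (X n ω) * r ^ visits X x₀ n ω) ∂ℙx)
    (hr0 : 0 < r) (hr1 : r < 1) (hσ0 : 0 < σ) (hσr : σ * r < 1) (n : ℕ) :
    ∫⁻ ω, ENNReal.ofReal (σ ^ visits X x₀ n ω) ∂μ
      ≤ ENNReal.ofReal (max ((1 - σ * r) / (σ * (1 - r))) 1 * psi p x₀ φ (σ * r) x) := by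
  set C := max ((1 - σ * r) / (σ * (1 - r))) 1
  have hC : 0 ≤ C := le_trans zero_le_one (le_max_right _ _)
  have hX𝓕 : ∀ k < n, Measurable[𝓕 n] (X k) := fun k hk => measurable_iff_comap_le.2 <| by
    rw [h𝓕 n]
    exact le_iSup₂ (f := fun i (_ : i ≤ n) => MeasurableSpace.comap (X i) inferInstance) k hk.le
  have hdensity : Measurable fun ω =>
      ENNReal.ofReal (psi p x₀ φ r (X n ω) * r ^ visits X x₀ n ω) :=
    ENNReal.measurable_ofReal.comp (((measurable_of_countable (psi p x₀ φ r)).comp (hX n)).mul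
      ((measurable_of_countable fun k : ℕ => r ^ k).comp (measurable_visits fun k _ => hX k)))
  rw [lintegral_eq_lintegral_mul_of_forall_measurableSet (𝓕.le n) hdensity (hμ n)
    (g := fun ω => ENNReal.ofReal (σ ^ visits X x₀ n ω))
    (ENNReal.measurable_ofReal.comp ((measurable_of_countable _).comp (measurable_visits hX𝓕)))]
  calc ∫⁻ ω, ENNReal.ofReal (psi p x₀ φ r (X n ω) * r ^ visits X x₀ n ω)
        * ENNReal.ofReal (σ ^ visits X x₀ n ω) ∂ℙx
      = ∫⁻ ω, ENNReal.ofReal (psi p x₀ φ r (X n ω) * (σ * r) ^ visits X x₀ n ω) ∂ℙx := by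
        refine lintegral_congr fun ω => ?_
        rw [← ENNReal.ofReal_mul' (by positivity), mul_pow]
        ring_nf
    _ ≤ ∫⁻ ω, ENNReal.ofReal C
        * ENNReal.ofReal (psi p x₀ φ (σ * r) (X n ω) * (σ * r) ^ visits X x₀ n ω) ∂ℙx := by
        refine lintegral_mono fun ω => ?_
        rw [← ENNReal.ofReal_mul hC, ← mul_assoc]
        exact ENNReal.ofReal_le_ofReal (mul_le_mul_of_nonneg_right
          (psi_le_max_mul_psi hp0 hφ0 hr0 hr1 hσ0 hσr _) (by positivity))
    _ = ENNReal.ofReal (C * psi p x₀ φ (σ * r) x) := by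
        rw [lintegral_const_mul' _ _ ENNReal.ofReal_ne_top, lintegral_psi_mul_pow_visits hX hp0
          hp1 hfin hchain hφ0 hφx₀ hharm (by positivity) hσr, ENNReal.ofReal_mul hC]

theorem stmt18_general
    {E : Type*} [Countable E] [DecidableEq E] [MeasurableSpace E]
    [MeasurableSingletonClass E]
    {Ω : Type*} [m0 : MeasurableSpace Ω]
    (X : ℕ → Ω → E) (hXmeas : ∀ n, Measurable (X n))
    (ℙ : E → Measure Ω)
    (p : E → E → ℝ) (hp0 : ∀ y z, 0 ≤ p y z) (hp1 : ∀ y, ∑' z, p y z = 1)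
    (hfin : ∀ y, {z | p y z ≠ 0}.Finite)
    (hchain : ∀ (x : E) (n : ℕ) (s : ℕ → E),
      (ℙ x) {ω | ∀ i ≤ n, X i ω = s i}
        = (if s 0 = x then 1 else 0) *
            ∏ i ∈ Finset.range n, ENNReal.ofReal (p (s i) (s (i + 1))))
    -- the natural filtration of the chain
    (𝓕 : Filtration ℕ m0)
    (h𝓕 : ∀ n, 𝓕 n = ⨆ i ≤ n, MeasurableSpace.comap (X i) inferInstance)
    (x₀ : E) (φ : E → ℝ) (hφ0 : ∀ y, 0 ≤ φ y) (hφx₀ : φ x₀ = 0)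
    (hharm : ∀ y, y ≠ x₀ → ∑' z, p y z * φ z = φ y)
    (r σ : ℝ) (hr0 : 0 < r) (hr1 : r < 1) (hσ0 : 0 < σ) (hσr : σ < 1 / r)
    (x : E)
    -- the measure `μ = μ_x^{(r)}` with density `ψ_r(X_n)·r^{L_{n-1}^{x₀}}` on `𝓕_n`
    (μ : Measure Ω)
    (hμ : ∀ (n : ℕ) (A : Set Ω), MeasurableSet[𝓕 n] A →
      μ A = ∫⁻ ω in A,
        ENNReal.ofReal
          ((r / (1 - r) * (∑' z, p x₀ z * φ z) + φ (X n ω)) *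
            r ^ ∑ m ∈ Finset.range n, (if X m ω = x₀ then (1 : ℕ) else 0)) ∂(ℙ x)) :
    (∀ n : ℕ, 1 ≤ n →
      ∫⁻ ω,
          ENNReal.ofReal
            (σ ^ ∑ m ∈ Finset.range n, (if X m ω = x₀ then (1 : ℕ) else 0)) ∂μ
        ≤ ENNReal.ofReal
            (max ((1 - σ * r) / (σ * (1 - r))) 1 *
              (σ * r / (1 - σ * r) * (∑' z, p x₀ z * φ z) + φ x))) ∧
    (∫⁻ ω,
        limsup
          (fun n : ℕ => ENNReal.ofReal
            (σ ^ ∑ m ∈ Finset.range n, (if X m ω = x₀ then (1 : ℕ) else 0)))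
          atTop ∂μ) < ⊤ ∧
    μ {ω | {m : ℕ | X m ω = x₀}.Infinite} = 0 := by
  have hσr' : σ * r < 1 := (lt_div_iff₀ hr0).1 hσr
  have hbound : ∀ τ, 0 < τ → τ * r < 1 → ∀ n, ∫⁻ ω, ENNReal.ofReal (τ ^ visits X x₀ n ω) ∂μ
      ≤ ENNReal.ofReal (max ((1 - τ * r) / (τ * (1 - r))) 1 * psi p x₀ φ (τ * r) x) :=
    fun τ hτ0 hτr => lintegral_pow_visits_le hXmeas hp0 hp1 hfin (hchain x) hφ0 hφx₀ hharm h𝓕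
      hμ hr0 hr1 hτ0 hτr
  have hsup : ∀ τ, 1 ≤ τ → τ * r < 1 →
      ∫⁻ ω, ⨆ n, ENNReal.ofReal (τ ^ visits X x₀ n ω) ∂μ < ⊤ := fun τ hτ1 hτr =>
    lintegral_iSup_pow_visits_lt_top hXmeas hτ1 (hbound τ (by linarith) hτr)
  refine ⟨fun n _ => hbound σ hσ0 hσr' n, ?_, ?_⟩
  · -- `(max σ 1)^{L_{n-1}}` dominates `σ^{L_{n-1}}`, is monotone in `n`, and `max σ 1 * r < 1`.
    refine lt_of_le_of_lt (lintegral_mono fun ω => ?_) (hsup (max σ 1) (le_max_right σ 1)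
      (by rw [max_mul_of_nonneg _ _ hr0.le]; exact max_lt hσr' (by linarith)))
    refine limsup_le_of_le (by isBoundedDefault) (Eventually.of_forall fun n => ?_)
    exact le_iSup_of_le n (ENNReal.ofReal_le_ofReal
      (pow_le_pow_left₀ hσ0.le (le_max_left σ 1) _))
  · set τ := (1 + r⁻¹) / 2
    have hτ1 : 1 < τ := by have := one_lt_inv₀ hr0 |>.2 hr1; simp only [τ]; linarith
    have hτr : τ * r < 1 := by simp only [τ]; field_simp; linarith
    have hfinite := ae_lt_top (Measurable.iSup fun n => measurable_ofReal_pow_visits hXmeas τ n)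
      (hsup τ hτ1.le hτr).ne
    refine measure_mono_null (fun ω hinf => ?_) (ae_iff.1 hfinite)
    simp [iSup_ofReal_pow_visits_eq_top hτ1 hinf]

/-- **Section 4.1.2 (formulae (4.1.8), (4.1.9)).** Let `(ψ_r(X_n)·r^{L_{n-1}^{x₀}})`
be the positive martingale of Proposition 4.1.1, and let `μ_x^{(r)}` be the finite
measure on `𝓕_∞` with `μ_x^{(r)}|_{𝓕_n} = ψ_r(X_n)·r^{L_{n-1}^{x₀}}·ℙ_x|_{𝓕_n}`.
Then for every `σ ∈ (0, 1/r)`: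
`μ_x^{(r)}(σ^{L_{n-1}^{x₀}}) ≤ max((1−σr)/(σ(1−r)), 1)·ψ_{σr}(x)` for all `n ≥ 1`;
consequently `μ_x^{(r)}(σ^{L_∞^{x₀}}) < ∞` and `L_∞^{x₀} < ∞`, `μ_x^{(r)}`-a.s. -/
theorem stmt18
    {E : Type*} [Countable E] [DecidableEq E] [MeasurableSpace E]
    [MeasurableSingletonClass E]
    {Ω : Type*} [m0 : MeasurableSpace Ω]
    (X : ℕ → Ω → E) (hXmeas : ∀ n, Measurable (X n))
    (ℙ : E → Measure Ω) (hprob : ∀ x, IsProbabilityMeasure (ℙ x))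
    (p : E → E → ℝ) (hp0 : ∀ y z, 0 ≤ p y z) (hp1 : ∀ y, ∑' z, p y z = 1)
    (hfin : ∀ y, {z | p y z ≠ 0}.Finite)
    (hchain : ∀ (x : E) (n : ℕ) (s : ℕ → E),
      (ℙ x) {ω | ∀ i ≤ n, X i ω = s i}
        = (if s 0 = x then 1 else 0) *
            ∏ i ∈ Finset.range n, ENNReal.ofReal (p (s i) (s (i + 1))))
    -- recurrence
    (hrec : ∀ x y : E, ∀ᵐ ω ∂(ℙ x), ∃ n : ℕ, 0 < n ∧ X n ω = y)
    -- the natural filtration of the chain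
    (𝓕 : Filtration ℕ m0)
    (h𝓕 : ∀ n, 𝓕 n = ⨆ i ≤ n, MeasurableSpace.comap (X i) inferInstance)
    (x₀ : E) (φ : E → ℝ) (hφ0 : ∀ y, 0 ≤ φ y) (hφx₀ : φ x₀ = 0)
    (hharm : ∀ y, y ≠ x₀ → ∑' z, p y z * φ z = φ y)
    -- `φ` is unbounded
    (hunb : ∀ C : ℝ, ∃ y, C < φ y)
    (r σ : ℝ) (hr0 : 0 < r) (hr1 : r < 1) (hσ0 : 0 < σ) (hσr : σ < 1 / r)
    (x : E)
    -- the measure `μ = μ_x^{(r)}` with density `ψ_r(X_n)·r^{L_{n-1}^{x₀}}` on `𝓕_n`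
    (μ : Measure Ω)
    (hμ : ∀ (n : ℕ) (A : Set Ω), MeasurableSet[𝓕 n] A →
      μ A = ∫⁻ ω in A,
        ENNReal.ofReal
          ((r / (1 - r) * (∑' z, p x₀ z * φ z) + φ (X n ω)) *
            r ^ ∑ m ∈ Finset.range n, (if X m ω = x₀ then (1 : ℕ) else 0)) ∂(ℙ x)) :
    (∀ n : ℕ, 1 ≤ n →
      ∫⁻ ω,
          ENNReal.ofReal
            (σ ^ ∑ m ∈ Finset.range n, (if X m ω = x₀ then (1 : ℕ) else 0)) ∂μ
        ≤ ENNReal.ofReal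
            (max ((1 - σ * r) / (σ * (1 - r))) 1 *
              (σ * r / (1 - σ * r) * (∑' z, p x₀ z * φ z) + φ x))) ∧
    (∫⁻ ω,
        limsup
          (fun n : ℕ => ENNReal.ofReal
            (σ ^ ∑ m ∈ Finset.range n, (if X m ω = x₀ then (1 : ℕ) else 0)))
          atTop ∂μ) < ⊤ ∧
    μ {ω | {m : ℕ | X m ω = x₀}.Infinite} = 0 :=
  stmt18_general (m0 := m0) X hXmeas ℙ p hp0 hp1 hfin hchain 𝓕 h𝓕 x₀ φ hφ0 hφx₀ hharm r σ hr0 hr1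
    hσ0 hσr x μ hμ
end
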